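/- arXiv:2512.15208 — 10 statements merged into one kernel-verified Lean document; each statement's English description precedes it below -/
import Mathlib

section
/- Let X be a real Banach space and let P be a nontrivial L^p-projection on X for some 1 ≤ p < ∞ (i.e., ‖x‖^p = ‖Px‖^p + ‖x − Px‖^p for all x). Then P is not Birkhoff-James orthogonal to the identity operator I; in fact ‖P − (1/2)I‖ ≤ 1/2 < ‖P‖. -/
/-- A nontrivial L^p-projection on a real Banach space satisfies
`‖P - (1/2)I‖ ≤ 1/2 < ‖P‖`; in particular `P` is not Birkhoff-James orthogonal
to the identity operator. -/
theorem stmt0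
    (X : Type*) [NormedAddCommGroup X] [NormedSpace ℝ X] [CompleteSpace X]
    (p : ℝ) (hp : 1 ≤ p)
    (P : X →L[ℝ] X)
    (hproj : P.comp P = P)
    (hP0 : P ≠ 0) (hPI : P ≠ ContinuousLinearMap.id ℝ X)
    (hLp : ∀ x : X, ‖x‖ ^ p = ‖P x‖ ^ p + ‖x - P x‖ ^ p) :
    ‖P - (1/2 : ℝ) • ContinuousLinearMap.id ℝ X‖ ≤ 1/2 ∧
    (1/2 : ℝ) < ‖P‖ ∧
    ¬ (∀ lam : ℝ, ‖P + lam • ContinuousLinearMap.id ℝ X‖ ≥ ‖P‖) := by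
  have hp0 : p ≠ 0 := by intro h; rw [h] at hp; linarith
  have hPP : ∀ x : X, P (P x) = P x := fun x =>
    congrFun (congrArg DFunLike.coe hproj) x
  have key : ∀ x : X, ‖P x - (1/2 : ℝ) • x‖ = (1/2) * ‖x‖ := by
    intro x
    set a := P x with ha
    set b := x - P x with hb
    have hPa : P a = a := hPP x
    have hPb : P b = 0 := by rw [hb, map_sub, hPP, sub_self]
    have h1 : ‖a - b‖ ^ p = ‖a‖ ^ p + ‖b‖ ^ p := by
      have h := hLp (a - b)
      rw [map_sub, hPa, hPb, sub_zero] at h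
      have : a - b - a = -b := by abel
      rw [this, norm_neg] at h
      exact h
    have h2 : ‖a - b‖ ^ p = ‖x‖ ^ p := by rw [h1, ← hLp x]
    have h3 : ‖a - b‖ = ‖x‖ :=
      Real.rpow_left_injOn hp0 (by simp [norm_nonneg]) (by simp [norm_nonneg]) h2
    have heq : P x - (1/2 : ℝ) • x = (1/2 : ℝ) • (a - b) := by
      rw [ha, hb]; module
    rw [heq, norm_smul, h3]
    norm_num
  have hop : ‖P - (1/2 : ℝ) • ContinuousLinearMap.id ℝ X‖ ≤ 1/2 := by
    apply ContinuousLinearMap.opNorm_le_bound _ (by norm_num)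
    intro x
    have : (P - (1/2 : ℝ) • ContinuousLinearMap.id ℝ X) x
        = P x - (1/2 : ℝ) • x := by
      simp
    rw [this, key x]
  have hx : ∃ x : X, P x ≠ 0 := by
    by_contra h
    push_neg at h
    exact hP0 (by ext x; simpa using h x)
  obtain ⟨x, hxne⟩ := hx
  have hnorm_pos : 0 < ‖P x‖ := norm_pos_iff.mpr hxne
  have hle : ‖P (P x)‖ ≤ ‖P‖ * ‖P x‖ := P.le_opNorm (P x)
  rw [hPP x] at hle
  have h1P : 1 ≤ ‖P‖ := by
    by_contra h
    push_neg at h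
    nlinarith
  refine ⟨hop, by linarith, ?_⟩
  intro h
  have := h (-(1/2))
  have hsub : P + (-(1/2) : ℝ) • ContinuousLinearMap.id ℝ X
      = P - (1/2 : ℝ) • ContinuousLinearMap.id ℝ X := by
    rw [neg_smul, ← sub_eq_add_neg]
  rw [hsub] at this
  linarith
end

section
/- Let X be a real Banach space and let P be a nontrivial M-projection on X (i.e., ‖x‖ = max{‖Px‖, ‖x − Px‖} for all x). Then ‖P − (1/2)I‖ ≤ 1/2; in particular P is not Birkhoff-James orthogonal to the identity operator. -/
/-- A nontrivial M-projection on a real Banach space satisfies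
`‖P - (1/2)I‖ ≤ 1/2`; in particular `P` is not Birkhoff-James orthogonal to the
identity operator. -/
theorem stmt1
    (X : Type*) [NormedAddCommGroup X] [NormedSpace ℝ X] [CompleteSpace X]
    (P : X →L[ℝ] X)
    (hproj : P.comp P = P)
    (hP0 : P ≠ 0) (hPI : P ≠ ContinuousLinearMap.id ℝ X)
    (hM : ∀ x : X, ‖x‖ = max ‖P x‖ ‖x - P x‖) :
    ‖P - (1/2 : ℝ) • ContinuousLinearMap.id ℝ X‖ ≤ 1/2 ∧
    ¬ (∀ lam : ℝ, ‖P + lam • ContinuousLinearMap.id ℝ X‖ ≥ ‖P‖) := by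
  have hPP : ∀ x : X, P (P x) = P x := fun x => by
    have := ContinuousLinearMap.ext_iff.mp hproj x
    simpa using this
  -- key pointwise bound
  have hkey : ∀ x : X, ‖P x - (2⁻¹ : ℝ) • x‖ = (1/2) * ‖x‖ := by
    intro x
    set y := (2:ℝ) • P x - x with hy
    have hPy : P y = P x := by
      simp [hy, map_sub, map_smul, hPP, two_smul]
    have hyPy : y - P y = P x - x := by
      rw [hPy]; simp [hy, two_smul]; abel
    have hny : ‖y‖ = ‖x‖ := by
      rw [hM y, hyPy, hPy, norm_sub_rev, ← hM x]
    have : P x - (2⁻¹ : ℝ) • x = (2⁻¹ : ℝ) • y := by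
      simp [hy, smul_sub, smul_smul]
    rw [this, norm_smul, hny]
    norm_num
  constructor
  · apply ContinuousLinearMap.opNorm_le_bound _ (by norm_num)
    intro x
    have := hkey x
    simp only [ContinuousLinearMap.sub_apply, ContinuousLinearMap.smul_apply,
      ContinuousLinearMap.id_apply]
    rw [show (1/2 : ℝ) = (2⁻¹ : ℝ) by norm_num] at *
    rw [this]
  · intro h
    -- ‖P‖ ≥ 1
    obtain ⟨x, hx⟩ : ∃ x, P x ≠ 0 := by
      by_contra hc
      push_neg at hc
      exact hP0 (ContinuousLinearMap.ext fun x => by simp [hc x])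
    have hfix : P (P x) = P x := hPP x
    have h1 : (1:ℝ) * ‖P x‖ ≤ ‖P‖ * ‖P x‖ := by
      rw [one_mul]
      calc ‖P x‖ = ‖P (P x)‖ := by rw [hfix]
        _ ≤ ‖P‖ * ‖P x‖ := P.le_opNorm _
    have hnorm : (1:ℝ) ≤ ‖P‖ :=
      le_of_mul_le_mul_right (by simpa using h1) (norm_pos_iff.mpr hx)
    have h2 := h (-(1/2))
    have h3 : ‖P + (-(1/2) : ℝ) • ContinuousLinearMap.id ℝ X‖ ≤ 1/2 := by
      have : P + (-(1/2) : ℝ) • ContinuousLinearMap.id ℝ X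
          = P - (1/2 : ℝ) • ContinuousLinearMap.id ℝ X := by
        rw [neg_smul, ← sub_eq_add_neg]
      rw [this]
      apply ContinuousLinearMap.opNorm_le_bound _ (by norm_num)
      intro x
      have := hkey x
      simp only [ContinuousLinearMap.sub_apply, ContinuousLinearMap.smul_apply,
        ContinuousLinearMap.id_apply]
      rw [show (1/2 : ℝ) = (2⁻¹ : ℝ) by norm_num] at *
      rw [this]
    linarith
end

section
/- Let P and Q be nontrivial distinct L^p-projections (p ≠ 2) on a real Banach space X. Then P is Birkhoff-James orthogonal to Q (in the operator norm) if and only if R(P) ∩ ker(Q) ≠ {0}. -/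
open Real

private lemma aux_add_rpow {p a b : ℝ} (hp : 1 ≤ p) (ha : 0 ≤ a) (hb : 0 ≤ b) :
    (a + b) ^ p ≤ 2 ^ (p - 1) * (a ^ p + b ^ p) := by
  have h := NNReal.rpow_add_le_mul_rpow_add_rpow a.toNNReal b.toNNReal hp
  have h2 := NNReal.coe_le_coe.2 h
  push_cast [Real.coe_toNNReal _ ha, Real.coe_toNNReal _ hb] at h2
  convert h2 using 2

/-- for `2 ≤ p`, `2 + p ε² ≤ (1+ε)^p + (1-ε)^p` -/
private lemma aux_pm_ge {p ε : ℝ} (hp : 2 ≤ p) (hε0 : 0 ≤ ε) (hε1 : ε ≤ 1) :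
    2 + p * ε ^ 2 ≤ (1 + ε) ^ p + (1 - ε) ^ p := by
  set q := p / 2 with hq
  have hq1 : 1 ≤ q := by rw [hq]; linarith
  have h1 : (0:ℝ) ≤ (1 + ε) ^ (2:ℕ) := by positivity
  have h2 : (0:ℝ) ≤ (1 - ε) ^ (2:ℕ) := by nlinarith
  have key := aux_add_rpow (p := q) hq1 h1 h2
  have e1 : ((1 + ε) ^ (2:ℕ) : ℝ) ^ q = (1 + ε) ^ p := by
    rw [← Real.rpow_natCast (1 + ε) 2, ← Real.rpow_mul (by linarith)]
    congr 1; push_cast; ring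
  have e2 : ((1 - ε) ^ (2:ℕ) : ℝ) ^ q = (1 - ε) ^ p := by
    rw [← Real.rpow_natCast (1 - ε) 2, ← Real.rpow_mul (by linarith)]
    congr 1; push_cast; ring
  have e3 : ((1 + ε) ^ (2:ℕ) + (1 - ε) ^ (2:ℕ) : ℝ) = 2 * (1 + ε ^ 2) := by ring
  rw [e1, e2, e3] at key
  have e4 : (2 * (1 + ε ^ 2)) ^ q = 2 ^ q * (1 + ε ^ 2) ^ q := by
    rw [Real.mul_rpow (by norm_num : (0:ℝ) ≤ 2) (by positivity : (0:ℝ) ≤ 1 + ε ^ 2)]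
  rw [e4] at key
  have e5 : (2:ℝ) ^ q = 2 ^ (q - 1) * 2 := by
    rw [← Real.rpow_add_one (by norm_num) (q - 1)]; ring_nf
  have hb : 1 + q * ε ^ 2 ≤ (1 + ε ^ 2) ^ q :=
    one_add_mul_self_le_rpow_one_add (by nlinarith [sq_nonneg ε]) hq1
  have hpos : (0:ℝ) < 2 ^ (q - 1) := Real.rpow_pos_of_pos (by norm_num) _
  rw [e5] at key
  have key2 : 2 * (1 + ε ^ 2) ^ q ≤ (1 + ε) ^ p + (1 - ε) ^ p := by
    have h3 : 2 ^ (q-1) * (2 * (1 + ε ^ 2) ^ q) ≤ 2 ^ (q-1) * ((1 + ε) ^ p + (1 - ε) ^ p) := by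
      linarith [key]
    exact (mul_le_mul_iff_right₀ hpos).1 h3
  have : 2 + p * ε ^ 2 = 2 * (1 + q * ε ^ 2) := by rw [hq]; ring
  rw [this]
  nlinarith [hb]

/-- for `1 ≤ p ≤ 2`, `(1+ε)^p + (1-ε)^p ≤ 2 + p ε²` -/
private lemma aux_pm_le {p ε : ℝ} (hp : 1 ≤ p) (hp2 : p ≤ 2) (hε0 : 0 ≤ ε) (hε1 : ε ≤ 1) :
    (1 + ε) ^ p + (1 - ε) ^ p ≤ 2 + p * ε ^ 2 := by
  have hp0 : 0 < p := by linarith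
  set r := 2 / p with hr
  have hr1 : 1 ≤ r := by rw [hr, le_div_iff₀ hp0]; linarith
  have ha : (0:ℝ) ≤ (1 + ε) ^ p := Real.rpow_nonneg (by linarith) _
  have hb : (0:ℝ) ≤ (1 - ε) ^ p := Real.rpow_nonneg (by linarith) _
  have key := aux_add_rpow (p := r) hr1 ha hb
  have e1 : ((1 + ε) ^ p : ℝ) ^ r = (1 + ε) ^ (2:ℕ) := by
    rw [← Real.rpow_mul (by linarith), ← Real.rpow_natCast (1 + ε) 2]
    congr 1; rw [hr]; push_cast; field_simp
  have e2 : ((1 - ε) ^ p : ℝ) ^ r = (1 - ε) ^ (2:ℕ) := by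
    rw [← Real.rpow_mul (by linarith), ← Real.rpow_natCast (1 - ε) 2]
    congr 1; rw [hr]; push_cast; field_simp
  rw [e1, e2] at key
  have e3 : ((1 + ε) ^ (2:ℕ) + (1 - ε) ^ (2:ℕ) : ℝ) = 2 * (1 + ε ^ 2) := by ring
  rw [e3] at key
  have e5 : (2:ℝ) ^ (r - 1) * (2 * (1 + ε ^ 2)) = 2 ^ r * (1 + ε ^ 2) := by
    rw [show (2:ℝ) ^ r = 2 ^ (r - 1) * 2 by
      rw [← Real.rpow_add_one (by norm_num) (r - 1)]; ring_nf]
    ring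
  rw [e5] at key
  have hS0 : (0:ℝ) ≤ (1 + ε) ^ p + (1 - ε) ^ p := by linarith
  have hr0 : (0:ℝ) < r := by linarith
  have mono := Real.rpow_le_rpow (Real.rpow_nonneg hS0 r) key (by positivity : (0:ℝ) ≤ r⁻¹)
  rw [Real.rpow_rpow_inv hS0 (ne_of_gt hr0)] at mono
  have e6 : (2 ^ r * (1 + ε ^ 2)) ^ r⁻¹ = 2 * (1 + ε ^ 2) ^ (p / 2) := by
    rw [Real.mul_rpow (Real.rpow_nonneg (by norm_num) _) (by positivity : (0:ℝ) ≤ 1 + ε ^ 2),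
      ← Real.rpow_mul (by norm_num : (0:ℝ) ≤ 2), mul_inv_cancel₀ (ne_of_gt hr0), Real.rpow_one]
    congr 1
    rw [hr, inv_div]
  rw [e6] at mono
  have hbern : (1 + ε ^ 2) ^ (p / 2) ≤ 1 + (p / 2) * ε ^ 2 :=
    rpow_one_add_le_one_add_mul_self (by nlinarith [sq_nonneg ε]) (by positivity) (by linarith)
  calc (1 + ε) ^ p + (1 - ε) ^ p ≤ 2 * (1 + ε ^ 2) ^ (p / 2) := mono
    _ ≤ 2 * (1 + (p / 2) * ε ^ 2) := by linarith
    _ = 2 + p * ε ^ 2 := by ring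

private lemma aux_limit {c K q : ℝ} (hc : 0 < c) (hK : 0 ≤ K) (hq : 0 < q)
    (h : ∀ ε : ℝ, 0 < ε → ε < 1 → c ≤ K * ε ^ q) : False := by
  set x := c / (2 * (K + 1)) with hx
  have hx0 : 0 < x := by rw [hx]; positivity
  set ε := min (1/2 : ℝ) (x ^ q⁻¹) with hε
  have hδ0 : (0:ℝ) < x ^ q⁻¹ := Real.rpow_pos_of_pos hx0 _
  have hε0 : 0 < ε := lt_min (by norm_num) hδ0
  have hε1 : ε < 1 := lt_of_le_of_lt (min_le_left _ _) (by norm_num)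
  have h1 := h ε hε0 hε1
  have h2 : ε ^ q ≤ (x ^ q⁻¹) ^ q :=
    Real.rpow_le_rpow hε0.le (min_le_right _ _) hq.le
  rw [Real.rpow_inv_rpow hx0.le (ne_of_gt hq)] at h2
  have h3 : K * ε ^ q ≤ K * x := by
    exact mul_le_mul_of_nonneg_left h2 hK
  have h4 : K * x ≤ (K + 1) * x := by nlinarith
  have h5 : (K + 1) * x = c / 2 := by
    rw [hx]; field_simp
  linarith

private lemma key_lemma {X : Type*} [NormedAddCommGroup X] [NormedSpace ℝ X]
    {p : ℝ} (hp : 1 ≤ p) (hp2 : p ≠ 2)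
    {E F : X →L[ℝ] X}
    (hFi : ∀ x, F (F x) = F x)
    (hLpE : ∀ x : X, ‖x‖ ^ p = ‖E x‖ ^ p + ‖x - E x‖ ^ p)
    (hLpF : ∀ x : X, ‖x‖ ^ p = ‖F x‖ ^ p + ‖x - F x‖ ^ p)
    {y : X} (hy : E y = y) : E (F y) = F y := by
  have hp0 : (0:ℝ) < p := by linarith
  set u := F y with hu
  set v := y - F y with hv
  set w := u - E u with hw
  have huv : u + v = y := by rw [hu, hv]; abel
  have hFu : F u = u := hFi y
  have hFv : F v = 0 := by rw [hv, map_sub, hFi y, sub_self]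
  have hEu : E u = u - w := by rw [hw]; abel
  have hEv : E v = v + w := by
    have h1 : E u + E v = y := by rw [← map_add, huv, hy]
    have h2 : E v = y - E u := by rw [← h1]; abel
    rw [h2, hEu, ← huv]; abel
  set A := ‖u‖ ^ p with hA
  set B := ‖v‖ ^ p with hB
  set c := ‖w‖ ^ p with hc
  have hsm : ∀ (r : ℝ) (z : X), ‖r • z‖ ^ p = |r| ^ p * ‖z‖ ^ p := by
    intro r z
    rw [norm_smul, Real.norm_eq_abs, Real.mul_rpow (abs_nonneg r) (norm_nonneg z)]
  have hId : ∀ s t : ℝ, ‖s • u + t • v + (t - s) • w‖ ^ p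
      = |s| ^ p * A + |t| ^ p * B - |s - t| ^ p * c := by
    intro s t
    have hz1 : ‖s • u + t • v‖ ^ p = |s| ^ p * A + |t| ^ p * B := by
      have hF : F (s • u + t • v) = s • u := by
        rw [map_add, map_smul, map_smul, hFu, hFv, smul_zero, add_zero]
      have h1 := hLpF (s • u + t • v)
      rw [hF, show s • u + t • v - s • u = t • v from by abel] at h1
      rw [h1, hsm, hsm]
    have hE : E (s • u + t • v) = s • u + t • v + (t - s) • w := by
      rw [map_add, map_smul, map_smul, hEu, hEv]
      module
    have h2 := hLpE (s • u + t • v)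
    rw [hE, hz1, show s • u + t • v - (s • u + t • v + (t - s) • w) = (s - t) • w from by
      module] at h2
    rw [hsm] at h2
    linarith
  have hA0 : 0 ≤ A := Real.rpow_nonneg (norm_nonneg _) _
  have hB0 : 0 ≤ B := Real.rpow_nonneg (norm_nonneg _) _
  have hc0 : 0 ≤ c := Real.rpow_nonneg (norm_nonneg _) _
  have hyAB : ‖y‖ ^ p = A + B := by
    have h1 := hLpF y
    rw [← hu, ← hv] at h1
    exact h1
  suffices hcz : c ≤ 0 by
    have hwz : w = 0 := by
      by_contra hwne
      have h1 : 0 < ‖w‖ := norm_pos_iff.2 hwne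
      have h2 : 0 < c := Real.rpow_pos_of_pos h1 p
      linarith
    have h3 : u = E u := by rwa [hw, sub_eq_zero] at hwz
    exact h3.symm
  by_contra hcle
  push_neg at hcle
  -- common computation: for 0 < ε < 1, with s,t chosen per case
  rcases lt_or_gt_of_ne hp2 with hplt | hpgt
  · -- case p < 2 : use s = 1+ε, t = 1-ε and swap
    refine aux_limit hcle (show (0:ℝ) ≤ p * (A + B) by nlinarith)
      (show (0:ℝ) < 2 - p by linarith) ?_
    intro ε hε0 hε1
    have habs1 : |1 + ε| = 1 + ε := abs_of_pos (by linarith)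
    have habs2 : |1 - ε| = 1 - ε := abs_of_nonneg (by linarith)
    have habs3 : |(1 + ε) - (1 - ε)| = 2 * ε := by
      rw [show (1 + ε) - (1 - ε) = 2 * ε from by ring, abs_of_pos (by linarith)]
    have habs4 : |(1 - ε) - (1 + ε)| = 2 * ε := by
      rw [show (1 - ε) - (1 + ε) = -(2 * ε) from by ring, abs_neg, abs_of_pos (by linarith)]
    have ha := hId (1 + ε) (1 - ε)
    have hb := hId (1 - ε) (1 + ε)
    rw [habs1, habs2, habs3] at ha
    rw [habs1, habs2, habs4] at hb
    set va := (1 + ε) • u + (1 - ε) • v + ((1 - ε) - (1 + ε)) • w with hva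
    set vb := (1 - ε) • u + (1 + ε) • v + ((1 + ε) - (1 - ε)) • w with hvb
    have hsumv : va + vb = (2:ℝ) • y := by rw [hva, hvb, ← huv]; module
    have htri : 2 * ‖y‖ ≤ ‖va‖ + ‖vb‖ := by
      have h1 : ‖va + vb‖ ≤ ‖va‖ + ‖vb‖ := norm_add_le _ _
      rw [hsumv, norm_smul] at h1
      simpa using h1
    have hmono : (2 * ‖y‖) ^ p ≤ (‖va‖ + ‖vb‖) ^ p :=
      Real.rpow_le_rpow (by positivity) htri hp0.le
    have hjen : (‖va‖ + ‖vb‖) ^ p ≤ 2 ^ (p - 1) * (‖va‖ ^ p + ‖vb‖ ^ p) :=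
      aux_add_rpow hp (norm_nonneg _) (norm_nonneg _)
    have h2yp : (2 * ‖y‖) ^ p = 2 ^ p * (A + B) := by
      rw [Real.mul_rpow (by norm_num) (norm_nonneg _), hyAB]
    have hS : (1 + ε) ^ p + (1 - ε) ^ p ≤ 2 + p * ε ^ 2 :=
      aux_pm_le hp hplt.le hε0.le hε1.le
    -- combine: 2^p (A+B) ≤ 2^(p-1) * ( ((1+ε)^p+(1-ε)^p)(A+B) - 2 (2ε)^p c )
    have hsum_p : ‖va‖ ^ p + ‖vb‖ ^ p
        = ((1 + ε) ^ p + (1 - ε) ^ p) * (A + B) - 2 * (2 * ε) ^ p * c := by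
      rw [ha, hb]; ring
    have h2p : (2:ℝ) ^ p = 2 ^ (p - 1) * 2 := by
      rw [← Real.rpow_add_one (by norm_num) (p - 1)]; ring_nf
    have hpos : (0:ℝ) < 2 ^ (p - 1) := Real.rpow_pos_of_pos (by norm_num) _
    have hmain : 2 * (A + B) ≤ ((1 + ε) ^ p + (1 - ε) ^ p) * (A + B) - 2 * (2 * ε) ^ p * c := by
      have h1 : 2 ^ (p - 1) * (2 * (A + B)) ≤ 2 ^ (p - 1) *
          (((1 + ε) ^ p + (1 - ε) ^ p) * (A + B) - 2 * (2 * ε) ^ p * c) := by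
        rw [← hsum_p]
        calc 2 ^ (p - 1) * (2 * (A + B)) = 2 ^ p * (A + B) := by rw [h2p]; ring
          _ = (2 * ‖y‖) ^ p := h2yp.symm
          _ ≤ (‖va‖ + ‖vb‖) ^ p := hmono
          _ ≤ 2 ^ (p - 1) * (‖va‖ ^ p + ‖vb‖ ^ p) := hjen
      exact (mul_le_mul_iff_right₀ hpos).1 h1
    -- deduce 2 (2ε)^p c ≤ p ε² (A+B)
    have hprod : ((1 + ε) ^ p + (1 - ε) ^ p) * (A + B) ≤ (2 + p * ε ^ 2) * (A + B) :=
      mul_le_mul_of_nonneg_right (by linarith) (by linarith)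
    have hstep : 2 * (2 * ε) ^ p * c ≤ p * ε ^ 2 * (A + B) := by linarith [hmain, hprod]
    -- rewrite (2ε)^p = 2^p ε^p and ε² = ε^p * ε^(2-p)
    have he1 : (2 * ε) ^ p = 2 ^ p * ε ^ p := Real.mul_rpow (by norm_num) hε0.le
    have he2 : ε ^ (2:ℝ) = ε ^ p * ε ^ (2 - p) := by
      rw [← Real.rpow_add hε0]; norm_num
    have he3 : ε ^ (2:ℕ) = ε ^ (2:ℝ) := by
      rw [show ((2:ℝ)) = ((2:ℕ) : ℝ) from by norm_num, Real.rpow_natCast]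
    have hεp : (0:ℝ) < ε ^ p := Real.rpow_pos_of_pos hε0 _
    rw [he1] at hstep
    rw [he3, he2] at hstep
    -- hstep : 2 * (2^p * ε^p) * c ≤ p * (ε^p * ε^(2-p)) * (A+B)
    have h2pp : (1:ℝ) ≤ 2 ^ p := Real.one_le_rpow (by norm_num) (by linarith)
    have hfin : ε ^ p * c ≤ ε ^ p * (p * (A + B) * ε ^ (2 - p)) := by
      have h1 : ε ^ p * c ≤ 2 * (2 ^ p * ε ^ p) * c := by
        have h2 := mul_le_mul_of_nonneg_right
          (by linarith [h2pp] : (1:ℝ) ≤ 2 * 2 ^ p) (mul_nonneg hεp.le hc0)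
        linarith [h2]
      linarith [hstep, h1]
    exact (mul_le_mul_iff_right₀ hεp).1 hfin
  · -- case p > 2 : use s = 1, t = ε and s = 1, t = -ε
    refine aux_limit hcle (show (0:ℝ) ≤ 2 * B by linarith)
      (show (0:ℝ) < p - 2 by linarith) ?_
    intro ε hε0 hε1
    have habs1 : |(1:ℝ)| = 1 := abs_one
    have habs2 : |ε| = ε := abs_of_pos hε0
    have habs3 : |-ε| = ε := by rw [abs_neg, habs2]
    have habs4 : |(1:ℝ) - ε| = 1 - ε := abs_of_nonneg (by linarith)
    have habs5 : |(1:ℝ) - -ε| = 1 + ε := by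
      rw [show (1:ℝ) - -ε = 1 + ε from by ring, abs_of_pos (by linarith)]
    have ha := hId 1 ε
    have hb := hId 1 (-ε)
    rw [habs1, habs2, habs4, Real.one_rpow, one_mul] at ha
    rw [habs1, habs3, habs5, Real.one_rpow, one_mul] at hb
    have h0 := hId 1 0
    rw [habs1, abs_zero, Real.one_rpow, one_mul, Real.zero_rpow (ne_of_gt hp0), zero_mul,
      sub_zero, abs_one, Real.one_rpow, one_mul] at h0
    -- h0 : ‖1•u + 0•v + (0-1)•w‖^p = A - c
    set va := (1:ℝ) • u + ε • v + (ε - 1) • w with hva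
    set vb := (1:ℝ) • u + (-ε) • v + (-ε - 1) • w with hvb
    set vm := (1:ℝ) • u + (0:ℝ) • v + ((0:ℝ) - 1) • w with hvm
    have hsumv : va + vb = (2:ℝ) • vm := by rw [hva, hvb, hvm]; module
    have htri : 2 * ‖vm‖ ≤ ‖va‖ + ‖vb‖ := by
      have h1 : ‖va + vb‖ ≤ ‖va‖ + ‖vb‖ := norm_add_le _ _
      rw [hsumv, norm_smul] at h1
      simpa using h1
    have hmono : (2 * ‖vm‖) ^ p ≤ (‖va‖ + ‖vb‖) ^ p :=
      Real.rpow_le_rpow (by positivity) htri hp0.le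
    have hjen : (‖va‖ + ‖vb‖) ^ p ≤ 2 ^ (p - 1) * (‖va‖ ^ p + ‖vb‖ ^ p) :=
      aux_add_rpow hp (norm_nonneg _) (norm_nonneg _)
    have h2yp : (2 * ‖vm‖) ^ p = 2 ^ p * (A - c) := by
      rw [Real.mul_rpow (by norm_num) (norm_nonneg _), h0]; norm_num
    have hS : 2 + p * ε ^ 2 ≤ (1 + ε) ^ p + (1 - ε) ^ p :=
      aux_pm_ge hpgt.le hε0.le hε1.le
    have hsum_p : ‖va‖ ^ p + ‖vb‖ ^ p
        = 2 * A + 2 * ε ^ p * B - ((1 + ε) ^ p + (1 - ε) ^ p) * c := by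
      rw [ha, hb]; ring
    have h2p : (2:ℝ) ^ p = 2 ^ (p - 1) * 2 := by
      rw [← Real.rpow_add_one (by norm_num) (p - 1)]; ring_nf
    have hpos : (0:ℝ) < 2 ^ (p - 1) := Real.rpow_pos_of_pos (by norm_num) _
    have hmain : 2 * (A - c) ≤ 2 * A + 2 * ε ^ p * B - ((1 + ε) ^ p + (1 - ε) ^ p) * c := by
      have h1 : 2 ^ (p - 1) * (2 * (A - c)) ≤ 2 ^ (p - 1) *
          (2 * A + 2 * ε ^ p * B - ((1 + ε) ^ p + (1 - ε) ^ p) * c) := by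
        rw [← hsum_p]
        calc 2 ^ (p - 1) * (2 * (A - c)) = 2 ^ p * (A - c) := by rw [h2p]; ring
          _ = (2 * ‖vm‖) ^ p := h2yp.symm
          _ ≤ (‖va‖ + ‖vb‖) ^ p := hmono
          _ ≤ 2 ^ (p - 1) * (‖va‖ ^ p + ‖vb‖ ^ p) := hjen
      exact (mul_le_mul_iff_right₀ hpos).1 h1
    have hprod : (2 + p * ε ^ 2) * c ≤ ((1 + ε) ^ p + (1 - ε) ^ p) * c :=
      mul_le_mul_of_nonneg_right hS hc0
    have hstep : p * ε ^ 2 * c ≤ 2 * ε ^ p * B := by linarith [hmain, hprod]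
    have he2 : ε ^ (p:ℝ) = ε ^ (2:ℝ) * ε ^ (p - 2) := by
      rw [← Real.rpow_add hε0]; norm_num
    have he3 : ε ^ (2:ℕ) = ε ^ (2:ℝ) := by
      rw [show ((2:ℝ)) = ((2:ℕ) : ℝ) from by norm_num, Real.rpow_natCast]
    have hε2 : (0:ℝ) < ε ^ (2:ℝ) := Real.rpow_pos_of_pos hε0 _
    rw [he2] at hstep
    rw [he3] at hstep
    -- hstep : p * ε^(2:ℝ) * c ≤ 2 * (ε^(2:ℝ) * ε^(p-2)) * B
    have hfin : ε ^ (2:ℝ) * c ≤ ε ^ (2:ℝ) * (2 * B * ε ^ (p - 2)) := by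
      have h1 : ε ^ (2:ℝ) * c ≤ p * ε ^ (2:ℝ) * c := by
        have h2 := mul_le_mul_of_nonneg_right (hp.trans (by linarith) : (1:ℝ) ≤ p)
          (mul_nonneg hε2.le hc0)
        linarith [h2]
      linarith [hstep, h1]
    exact (mul_le_mul_iff_right₀ hε2).1 hfin

private lemma comm_lemma {X : Type*} [NormedAddCommGroup X] [NormedSpace ℝ X]
    {p : ℝ} (hp : 1 ≤ p) (hp2 : p ≠ 2)
    {E F : X →L[ℝ] X}
    (hEi : ∀ x, E (E x) = E x) (hFi : ∀ x, F (F x) = F x)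
    (hLpE : ∀ x : X, ‖x‖ ^ p = ‖E x‖ ^ p + ‖x - E x‖ ^ p)
    (hLpF : ∀ x : X, ‖x‖ ^ p = ‖F x‖ ^ p + ‖x - F x‖ ^ p)
    (x : X) : E (F x) = F (E x) := by
  have h1 : E (F (E x)) = F (E x) := key_lemma hp hp2 hFi hLpE hLpF (hEi x)
  set E' : X →L[ℝ] X := ContinuousLinearMap.id ℝ X - E with hE'
  have hE'app : ∀ z : X, E' z = z - E z := fun z => rfl
  have hLpE' : ∀ z : X, ‖z‖ ^ p = ‖E' z‖ ^ p + ‖z - E' z‖ ^ p := by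
    intro z
    rw [hE'app, show z - (z - E z) = E z from by abel]
    linarith [hLpE z]
  have hE'i : E' (E' x) = E' x := by
    simp only [hE'app, map_sub, hEi]
    abel
  have h2 : E' (F (E' x)) = F (E' x) := key_lemma hp hp2 hFi hLpE' hLpF hE'i
  rw [hE'app] at h2
  -- h2 : F (E' x) - E (F (E' x)) = F (E' x), so E (F (E' x)) = 0
  have h3 : E (F (E' x)) = 0 := by
    have := sub_eq_self.1 h2
    exact this
  rw [hE'app, map_sub, map_sub] at h3
  -- h3 : E (F x) - E (F (E x)) = 0
  rw [h1] at h3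
  rw [sub_eq_zero] at h3
  exact h3

private lemma rpow_le_rev {p a b : ℝ} (hp : 0 < p) (hb : 0 ≤ b)
    (h : a ^ p ≤ b ^ p) : a ≤ b := by
  by_contra hlt
  push_neg at hlt
  exact absurd h (not_le.2 (Real.rpow_lt_rpow hb hlt hp))

/-- For nontrivial distinct L^p-projections (p ≠ 2) on a real Banach
space, `P ⊥_B Q` iff `R(P) ∩ ker(Q) ≠ {0}`. -/
theorem stmt2
    (X : Type*) [NormedAddCommGroup X] [NormedSpace ℝ X] [CompleteSpace X]
    (p : ℝ) (hp : 1 ≤ p) (hp2 : p ≠ 2)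
    (P Q : X →L[ℝ] X)
    (hPproj : P.comp P = P) (hQproj : Q.comp Q = Q)
    (hP0 : P ≠ 0) (hPI : P ≠ ContinuousLinearMap.id ℝ X)
    (hQ0 : Q ≠ 0) (hQI : Q ≠ ContinuousLinearMap.id ℝ X)
    (hPQ : P ≠ Q)
    (hLpP : ∀ x : X, ‖x‖ ^ p = ‖P x‖ ^ p + ‖x - P x‖ ^ p)
    (hLpQ : ∀ x : X, ‖x‖ ^ p = ‖Q x‖ ^ p + ‖x - Q x‖ ^ p) :
    (∀ lam : ℝ, ‖P + lam • Q‖ ≥ ‖P‖) ↔ (∃ x : X, x ≠ 0 ∧ P x = x ∧ Q x = 0) := by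
  have hp0 : (0:ℝ) < p := by linarith
  have hPi : ∀ x, P (P x) = P x := fun x => by
    conv_rhs => rw [← hPproj]
    rfl
  have hQi : ∀ x, Q (Q x) = Q x := fun x => by
    conv_rhs => rw [← hQproj]
    rfl
  have hcontr : ∀ (E : X →L[ℝ] X),
      (∀ z : X, ‖z‖ ^ p = ‖E z‖ ^ p + ‖z - E z‖ ^ p) → ∀ x, ‖E x‖ ≤ ‖x‖ := by
    intro E hE x
    have h := hE x
    have h1 : ‖E x‖ ^ p ≤ ‖x‖ ^ p := by
      have := Real.rpow_nonneg (norm_nonneg (x - E x)) p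
      linarith
    exact rpow_le_rev hp0 (norm_nonneg x) h1
  have hPnorm_le : ‖P‖ ≤ 1 :=
    P.opNorm_le_bound zero_le_one (fun x => by simpa using hcontr P hLpP x)
  have hPnorm_ge : 1 ≤ ‖P‖ := by
    obtain ⟨x, hx⟩ : ∃ x, P x ≠ 0 := by
      by_contra hn
      push_neg at hn
      exact hP0 (ContinuousLinearMap.ext fun z => by simp [hn z])
    have h1 : ‖P (P x)‖ ≤ ‖P‖ * ‖P x‖ := P.le_opNorm _
    rw [hPi x] at h1
    have hpos : 0 < ‖P x‖ := norm_pos_iff.2 hx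
    nlinarith
  constructor
  · intro h
    by_contra hno
    push_neg at hno
    have hcomm := comm_lemma hp hp2 hPi hQi hLpP hLpQ
    have hQP : ∀ x, Q (P x) = P x := by
      intro x
      have hQz : Q (P x - Q (P x)) = 0 := by
        rw [map_sub, hQi, sub_self]
      have hPz : P (P x - Q (P x)) = P x - Q (P x) := by
        rw [map_sub, hPi, hcomm (P x), hPi]
      by_cases hz : P x - Q (P x) = 0
      · rw [sub_eq_zero] at hz
        exact hz.symm
      · exact absurd hQz (hno _ hz hPz)
    have hPQx : ∀ x, P (Q x) = P x := fun x => by rw [hcomm x, hQP x]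
    have hbound : ‖P + (-(1/2) : ℝ) • Q‖ ≤ 1/2 := by
      apply ContinuousLinearMap.opNorm_le_bound _ (by norm_num)
      intro x
      have happ : (P + (-(1/2) : ℝ) • Q) x = P x - (1/2 : ℝ) • Q x := by
        simp [ContinuousLinearMap.add_apply, ContinuousLinearMap.smul_apply]
        module
      set yv := P x - (1/2 : ℝ) • Q x with hyv
      have hPy : P yv = (1/2 : ℝ) • P (Q x) := by
        rw [hyv, map_sub, map_smul, hPi, hPQx]
        module
      have hy2 : yv - (1/2 : ℝ) • P (Q x) = (-(1/2) : ℝ) • (Q x - P (Q x)) := by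
        rw [hyv, hPQx]
        module
      have hnp := hLpP yv
      rw [hPy, hy2, norm_smul, norm_smul, Real.norm_eq_abs,
        Real.mul_rpow (abs_nonneg _) (norm_nonneg _), Real.norm_eq_abs,
        Real.mul_rpow (abs_nonneg _) (norm_nonneg _)] at hnp
      have habs : |(1/2 : ℝ)| = 1/2 := by norm_num
      have habs2 : |(-(1/2) : ℝ)| = 1/2 := by norm_num
      rw [habs, habs2] at hnp
      -- hnp : ‖yv‖^p = (1/2)^p ‖P(Qx)‖^p + (1/2)^p ‖Qx - P(Qx)‖^p
      have hQnp := hLpP (Q x)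
      have hyvp : ‖yv‖ ^ p = (1/2 : ℝ) ^ p * ‖Q x‖ ^ p := by
        rw [hnp, hQnp]; ring
      have hQle : ‖Q x‖ ≤ ‖x‖ := hcontr Q hLpQ x
      have hQlep : ‖Q x‖ ^ p ≤ ‖x‖ ^ p :=
        Real.rpow_le_rpow (norm_nonneg _) hQle hp0.le
      have hfinal : ‖yv‖ ^ p ≤ ((1/2 : ℝ) * ‖x‖) ^ p := by
        rw [Real.mul_rpow (by norm_num) (norm_nonneg _)]
        have hhalf : (0:ℝ) ≤ (1/2 : ℝ) ^ p := Real.rpow_nonneg (by norm_num) _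
        rw [hyvp]
        exact mul_le_mul_of_nonneg_left hQlep hhalf
      have := rpow_le_rev hp0 (by positivity) hfinal
      rw [happ]
      exact this
    have h2 := h (-(1/2))
    linarith
  · rintro ⟨x, hx0, hPx, hQx⟩ lam
    have happ : (P + lam • Q) x = x := by
      simp [ContinuousLinearMap.add_apply, ContinuousLinearMap.smul_apply, hPx, hQx]
    have h1 : ‖x‖ ≤ ‖P + lam • Q‖ * ‖x‖ := by
      conv_lhs => rw [← happ]
      exact (P + lam • Q).le_opNorm x
    have hxpos : 0 < ‖x‖ := norm_pos_iff.2 hx0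
    have h2 : 1 ≤ ‖P + lam • Q‖ := by
      by_contra hlt
      push_neg at hlt
      nlinarith
    linarith
end

section
/- Let P and Q be nontrivial distinct M-projections on a real Banach space X. Then P ⊥_B Q if and only if R(P) ∩ ker(Q) ≠ {0}. -/
open ContinuousLinearMap

section Aux

variable {X : Type*} [NormedAddCommGroup X] [NormedSpace ℝ X]

private lemma mproj_pt {P : X →L[ℝ] X} (hPproj : P.comp P = P) (z : X) : P (P z) = P z := by
  have := congrArg (fun T : X →L[ℝ] X => T z) hPproj
  simpa using this

private lemma mproj_norm_le {P : X →L[ℝ] X} (hMP : ∀ x : X, ‖x‖ = max ‖P x‖ ‖x - P x‖) (x : X) :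
    ‖P x‖ ≤ ‖x‖ := by rw [hMP x]; exact le_max_left _ _

private lemma mproj_norm_le' {P : X →L[ℝ] X} (hMP : ∀ x : X, ‖x‖ = max ‖P x‖ ‖x - P x‖) (x : X) :
    ‖x - P x‖ ≤ ‖x‖ := by rw [hMP x]; exact le_max_right _ _

private lemma keybound {P : X →L[ℝ] X} (hPproj : P.comp P = P)
    (hMP : ∀ x : X, ‖x‖ = max ‖P x‖ ‖x - P x‖)
    (f : X →L[ℝ] ℝ) (x y : X) :
    f (P x) + f (y - P y) ≤ ‖f‖ * max ‖x‖ ‖y‖ := by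
  set z := P x + (y - P y) with hz
  have hPz : P z = P x := by
    simp [hz, map_add, map_sub, mproj_pt hPproj]
  have hnz : ‖z‖ = max ‖P x‖ ‖y - P y‖ := by
    have h := hMP z
    rw [hPz] at h
    have hzz : z - P x = y - P y := by rw [hz]; abel
    rw [hzz] at h; exact h
  have hzb : ‖z‖ ≤ max ‖x‖ ‖y‖ := by
    rw [hnz]; exact max_le_max (mproj_norm_le hMP x) (mproj_norm_le' hMP y)
  have hval : f (P x) + f (y - P y) = f z := by simp [hz]
  rw [hval]
  calc f z ≤ |f z| := le_abs_self _
    _ ≤ ‖f‖ * ‖z‖ := f.le_opNorm z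
    _ ≤ ‖f‖ * max ‖x‖ ‖y‖ := mul_le_mul_of_nonneg_left hzb (norm_nonneg f)

private lemma keybound' {P : X →L[ℝ] X} (hPproj : P.comp P = P)
    (hMP : ∀ x : X, ‖x‖ = max ‖P x‖ ‖x - P x‖)
    (f : X →L[ℝ] ℝ) (x y : X) :
    |f (P x)| + |f (y - P y)| ≤ ‖f‖ * max ‖x‖ ‖y‖ := by
  have base : ∀ x' y' : X, ‖x'‖ = ‖x‖ → ‖y'‖ = ‖y‖ →
      f (P x') + f (y' - P y') ≤ ‖f‖ * max ‖x‖ ‖y‖ := by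
    intro x' y' hx' hy'
    have := keybound hPproj hMP f x' y'
    rwa [hx', hy'] at this
  have hnx : ‖-x‖ = ‖x‖ := norm_neg x
  have hny : ‖-y‖ = ‖y‖ := norm_neg y
  have e1 : f (P (-x)) = -f (P x) := by rw [map_neg, map_neg]
  have e2 : f ((-y) - P (-y)) = -f (y - P y) := by
    have h : (-y) - P (-y) = -(y - P y) := by rw [map_neg]; abel
    rw [h, map_neg]
  rcases abs_cases (f (P x)) with ⟨h1, _⟩ | ⟨h1, _⟩ <;>
    rcases abs_cases (f (y - P y)) with ⟨h2, _⟩ | ⟨h2, _⟩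
  · rw [h1, h2]; exact base x y rfl rfl
  · rw [h1, h2]
    have := base x (-y) rfl hny
    rwa [e2] at this
  · rw [h1, h2]
    have := base (-x) y hnx rfl
    rwa [e1] at this
  · rw [h1, h2]
    have := base (-x) (-y) hnx hny
    rwa [e1, e2] at this

/-- the adjoint of an M-projection is an L-projection -/
private lemma dualL {P : X →L[ℝ] X} (hPproj : P.comp P = P)
    (hMP : ∀ x : X, ‖x‖ = max ‖P x‖ ‖x - P x‖)
    (f : X →L[ℝ] ℝ) :
    ‖f‖ = ‖f.comp P‖ + ‖f - f.comp P‖ := by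
  have happ : ∀ y : X, (f - f.comp P) y = f (y - P y) := by
    intro y; simp [map_sub]
  apply le_antisymm
  · have hsplit : f = f.comp P + (f - f.comp P) := by abel
    calc ‖f‖ = ‖f.comp P + (f - f.comp P)‖ := by rw [← hsplit]
      _ ≤ ‖f.comp P‖ + ‖f - f.comp P‖ := norm_add_le _ _
  · set B := ‖f - f.comp P‖ with hB
    have hBle : B ≤ ‖f‖ := by
      apply opNorm_le_bound _ (norm_nonneg f)
      intro y
      rw [happ y]
      calc ‖f (y - P y)‖ ≤ ‖f‖ * ‖y - P y‖ := f.le_opNorm _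
        _ ≤ ‖f‖ * ‖y‖ := mul_le_mul_of_nonneg_left (mproj_norm_le' hMP y) (norm_nonneg f)
    have hA : ‖f.comp P‖ ≤ ‖f‖ - B := by
      apply opNorm_le_bound _ (by linarith)
      intro x
      show ‖f (P x)‖ ≤ (‖f‖ - B) * ‖x‖
      rcases eq_or_lt_of_le (norm_nonneg x) with h0 | h0
      · have hx0 : x = 0 := norm_eq_zero.mp h0.symm
        simp [hx0]
      · have hfPx : |f (P x)| ≤ ‖f‖ * ‖x‖ := by
          calc |f (P x)| ≤ ‖f‖ * ‖P x‖ := f.le_opNorm _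
            _ ≤ ‖f‖ * ‖x‖ := mul_le_mul_of_nonneg_left (mproj_norm_le hMP x) (norm_nonneg f)
        have hBx : B ≤ (‖f‖ * ‖x‖ - |f (P x)|) / ‖x‖ := by
          apply opNorm_le_bound _ (div_nonneg (by linarith) h0.le)
          intro y
          rw [happ y, div_mul_eq_mul_div, le_div_iff₀ h0]
          rcases eq_or_lt_of_le (norm_nonneg y) with hy0 | hy0
          · have hy : y = 0 := norm_eq_zero.mp hy0.symm
            simp [hy]
          · set c := ‖x‖ / ‖y‖ with hc
            have hcpos : 0 < c := div_pos h0 hy0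
            have hny' : ‖c • y‖ = ‖x‖ := by
              rw [norm_smul, Real.norm_eq_abs, abs_of_pos hcpos, hc]
              field_simp
            have hkey := keybound' hPproj hMP f x (c • y)
            rw [hny', max_self] at hkey
            have hsub : c • y - P (c • y) = c • (y - P y) := by
              rw [map_smul, smul_sub]
            have habs : |f (c • y - P (c • y))| = c * |f (y - P y)| := by
              rw [hsub, map_smul, smul_eq_mul, abs_mul, abs_of_pos hcpos]
            rw [habs] at hkey
            have hmul : c * |f (y - P y)| * ‖y‖ = |f (y - P y)| * ‖x‖ := by
              rw [hc]; field_simp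
            have h2 : c * |f (y - P y)| * ‖y‖ ≤ (‖f‖ * ‖x‖ - |f (P x)|) * ‖y‖ :=
              mul_le_mul_of_nonneg_right (by linarith) hy0.le
            rw [hmul] at h2
            rw [Real.norm_eq_abs]
            exact h2
        have hBx' : B * ‖x‖ ≤ ‖f‖ * ‖x‖ - |f (P x)| := by
          have := mul_le_mul_of_nonneg_right hBx h0.le
          rwa [div_mul_cancel₀ _ (ne_of_gt h0)] at this
        rw [Real.norm_eq_abs]
        nlinarith
    linarith

/-- Half of the commutation: P Q = P Q P pointwise. -/
private lemma step {P Q : X →L[ℝ] X}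
    (hPproj : P.comp P = P) (hQproj : Q.comp Q = Q)
    (hMP : ∀ x : X, ‖x‖ = max ‖P x‖ ‖x - P x‖)
    (hMQ : ∀ x : X, ‖x‖ = max ‖Q x‖ ‖x - Q x‖) :
    ∀ x : X, P (Q x) = P (Q (P x)) := by
  have hfun : ∀ g : X →L[ℝ] ℝ,
      (g.comp P).comp Q - ((g.comp P).comp Q).comp P = 0 := by
    intro g
    set y := g.comp P with hydef
    have hy : y.comp P = y := by
      rw [hydef, comp_assoc, hPproj]
    set a := y.comp Q with hadef
    set b := y - a with hbdef
    have h1 : ‖y‖ = ‖a‖ + ‖b‖ := dualL hQproj hMQ y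
    have h2 : ‖a‖ = ‖a.comp P‖ + ‖a - a.comp P‖ := dualL hPproj hMP a
    have hbP : b.comp P = y - a.comp P := by
      rw [hbdef, sub_comp, hy]
    have hbsub : b - b.comp P = -(a - a.comp P) := by
      rw [hbdef, hbP]; abel
    have h3 : ‖b‖ = ‖b.comp P‖ + ‖a - a.comp P‖ := by
      have := dualL hPproj hMP b
      rwa [hbsub, norm_neg] at this
    have hsum : a.comp P + b.comp P = y := by
      rw [hbP]; abel
    have h4 : ‖y‖ ≤ ‖a.comp P‖ + ‖b.comp P‖ := by
      calc ‖y‖ = ‖a.comp P + b.comp P‖ := by rw [hsum]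
        _ ≤ _ := norm_add_le _ _
    have h5 : ‖a - a.comp P‖ ≤ 0 := by linarith
    exact norm_le_zero_iff.mp h5
  intro x
  have hzero : P (Q x) - P (Q (P x)) = 0 := by
    apply NormedSpace.eq_zero_of_forall_dual_eq_zero ℝ
    intro g
    have := congrArg (fun T : X →L[ℝ] ℝ => T x) (hfun g)
    simpa [map_sub] using this
  exact sub_eq_zero.mp hzero

/-- M-projections commute. -/
private lemma mcomm {P Q : X →L[ℝ] X}
    (hPproj : P.comp P = P) (hQproj : Q.comp Q = Q)
    (hMP : ∀ x : X, ‖x‖ = max ‖P x‖ ‖x - P x‖)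
    (hMQ : ∀ x : X, ‖x‖ = max ‖Q x‖ ‖x - Q x‖) :
    ∀ x : X, P (Q x) = Q (P x) := by
  set P' : X →L[ℝ] X := ContinuousLinearMap.id ℝ X - P with hP'def
  have hP'app : ∀ z : X, P' z = z - P z := fun z => rfl
  have hP'proj : P'.comp P' = P' := by
    ext z
    simp only [ContinuousLinearMap.comp_apply, hP'app, map_sub, mproj_pt hPproj]
    abel
  have hMP' : ∀ x : X, ‖x‖ = max ‖P' x‖ ‖x - P' x‖ := by
    intro x
    rw [hP'app]
    have hx : x - (x - P x) = P x := by abel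
    rw [hx, max_comm]
    exact hMP x
  have s1 := step hPproj hQproj hMP hMQ
  have s2 := step hP'proj hQproj hMP' hMQ
  intro x
  have h2 := s2 x
  simp only [hP'app, map_sub] at h2
  -- h2 : Q x - P (Q x) = Q x - Q (P x) - (P (Q x) - P (Q (P x)))
  have h3 : Q x - P (Q x) = Q x - Q (P x) := by
    rw [h2, ← s1 x]; abel
  exact sub_right_injective h3

end Aux

/-- For nontrivial distinct M-projections on a real Banach space,
`P ⊥_B Q` iff `R(P) ∩ ker(Q) ≠ {0}`. -/
theorem stmt3
    (X : Type*) [NormedAddCommGroup X] [NormedSpace ℝ X] [CompleteSpace X]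
    (P Q : X →L[ℝ] X)
    (hPproj : P.comp P = P) (hQproj : Q.comp Q = Q)
    (hP0 : P ≠ 0) (hPI : P ≠ ContinuousLinearMap.id ℝ X)
    (hQ0 : Q ≠ 0) (hQI : Q ≠ ContinuousLinearMap.id ℝ X)
    (hPQ : P ≠ Q)
    (hMP : ∀ x : X, ‖x‖ = max ‖P x‖ ‖x - P x‖)
    (hMQ : ∀ x : X, ‖x‖ = max ‖Q x‖ ‖x - Q x‖) :
    (∀ lam : ℝ, ‖P + lam • Q‖ ≥ ‖P‖) ↔ (∃ x : X, x ≠ 0 ∧ P x = x ∧ Q x = 0) := by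
  constructor
  · intro H
    by_contra hcon
    push_neg at hcon
    -- hcon : ∀ x, x ≠ 0 → P x = x → Q x ≠ 0
    have hcomm := mcomm hPproj hQproj hMP hMQ
    have hPQ' : ∀ x : X, P x = P (Q x) := by
      intro x
      set v := P x - P (Q x) with hv
      have hPv : P v = v := by
        rw [hv, map_sub, mproj_pt hPproj, mproj_pt hPproj]
      have hQv : Q v = 0 := by
        rw [hv, map_sub, ← hcomm x, ← hcomm (Q x), mproj_pt hQproj]
        abel
      by_contra hne
      have hvne : v ≠ 0 := fun h => hne (by rw [hv] at h; exact sub_eq_zero.mp h)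
      exact hcon v hvne hPv hQv
    -- ‖P‖ ≥ 1
    have hPnorm : (1 : ℝ) ≤ ‖P‖ := by
      obtain ⟨u, hu⟩ : ∃ u : X, P u ≠ 0 := by
        by_contra h
        push_neg at h
        exact hP0 (ContinuousLinearMap.ext fun u => by rw [h u]; rfl)
      have hPu : 0 < ‖P u‖ := norm_pos_iff.mpr hu
      have hle := P.le_opNorm (P u)
      rw [mproj_pt hPproj] at hle
      nlinarith
    -- ‖P - (1/2) Q‖ ≤ 1/2
    have hbound : ‖P + (-(1:ℝ)/2) • Q‖ ≤ 1/2 := by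
      apply opNorm_le_bound _ (by norm_num)
      intro x
      have happ : (P + (-(1:ℝ)/2) • Q) x = P (Q x) + (-(1:ℝ)/2) • Q x := by
        rw [ContinuousLinearMap.add_apply, ContinuousLinearMap.smul_apply, ← hPQ' x]
      set q := Q x with hq
      have hdecomp : P (Q x) + (-(1:ℝ)/2) • Q x = ((1:ℝ)/2) • (P q - (q - P q)) := by
        rw [hq, smul_sub, smul_sub]
        module
      set w := P q - (q - P q) with hw
      have hPw : P w = P q := by
        rw [hw, map_sub, map_sub, mproj_pt hPproj]
        abel
      have hnw : ‖w‖ = ‖q‖ := by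
        have h := hMP w
        rw [hPw] at h
        have hws : w - P q = -(q - P q) := by rw [hw]; abel
        rw [hws, norm_neg] at h
        rw [h, ← hMP q]
      have hqx : ‖q‖ ≤ ‖x‖ := by
        rw [hq]; exact mproj_norm_le hMQ x
      rw [happ, hdecomp, norm_smul, hnw]
      simp only [Real.norm_eq_abs]
      rw [abs_of_pos (by norm_num : (0:ℝ) < 1/2)]
      nlinarith [norm_nonneg q]
    have := H (-(1:ℝ)/2)
    linarith
  · rintro ⟨x, hx0, hPx, hQx⟩ lam
    have hPle : ‖P‖ ≤ 1 := by
      apply opNorm_le_bound _ zero_le_one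
      intro z
      rw [one_mul]
      exact mproj_norm_le hMP z
    have happ : (P + lam • Q) x = x := by
      rw [ContinuousLinearMap.add_apply, ContinuousLinearMap.smul_apply, hPx, hQx]
      simp
    have hxpos : 0 < ‖x‖ := norm_pos_iff.mpr hx0
    have h1 : (1 : ℝ) ≤ ‖P + lam • Q‖ := by
      have := (P + lam • Q).le_opNorm x
      rw [happ] at this
      nlinarith
    linarith
end

section
/- Let X be a real Banach space and P ∈ B(X) a nonzero finite rank L^p-projection (1 ≤ p < ∞). If C ⊆ S_X is a closed set with d(C, S_{R(P)}) > 0, then sup{‖Px‖ : x ∈ C} < 1. -/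
/-- If `P` is a nonzero finite rank L^p-projection and `C` is a closed
subset of the unit sphere with `d(C, S_{R(P)}) > 0`, then `sup {‖Px‖ : x ∈ C} < 1`. -/
theorem stmt5
    (X : Type*) [NormedAddCommGroup X] [NormedSpace ℝ X] [CompleteSpace X]
    (p : ℝ) (hp : 1 ≤ p)
    (P : X →L[ℝ] X)
    (hproj : P.comp P = P) (hP0 : P ≠ 0)
    (hLp : ∀ x : X, ‖x‖ ^ p = ‖P x‖ ^ p + ‖x - P x‖ ^ p)
    (hfin : FiniteDimensional ℝ (LinearMap.range (P : X →ₗ[ℝ] X)))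
    (C : Set X) (hCclosed : IsClosed C) (hCsphere : ∀ x ∈ C, ‖x‖ = 1)
    (δ : ℝ) (hδ : 0 < δ)
    (hdist : ∀ y ∈ C, ∀ z : X, z ∈ LinearMap.range (P : X →ₗ[ℝ] X) → ‖z‖ = 1 →
      δ ≤ ‖y - z‖) :
    sSup ((fun x => ‖P x‖) '' C) < 1 := by
  have hp0 : (0:ℝ) < p := lt_of_lt_of_le one_pos hp
  set d : ℝ := min (δ / 2) (1 / 2) with hd
  have hd0 : 0 < d := lt_min (by linarith) (by norm_num)
  have hd1 : d < 1 := lt_of_le_of_lt (min_le_right _ _) (by norm_num)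
  have hdδ : d ≤ δ / 2 := min_le_left _ _
  have hdp0 : 0 < d ^ p := Real.rpow_pos_of_pos hd0 p
  have hdp1 : d ^ p ≤ 1 := Real.rpow_le_one hd0.le hd1.le hp0.le
  set M : ℝ := max (1 - d) ((1 - d ^ p) ^ p⁻¹) with hM
  have hM1 : M < 1 := by
    apply max_lt (by linarith)
    have := Real.rpow_lt_one (by linarith : (0:ℝ) ≤ 1 - d ^ p) (by linarith)
      (by positivity : (0:ℝ) < p⁻¹)
    exact this
  have hM0 : (0:ℝ) ≤ M := le_max_of_le_left (by linarith)
  refine lt_of_le_of_lt (Real.sSup_le ?_ hM0) hM1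
  rintro _ ⟨x, hxC, rfl⟩
  have hx1 : ‖x‖ = 1 := hCsphere x hxC
  have hsum : (1:ℝ) = ‖P x‖ ^ p + ‖x - P x‖ ^ p := by
    have h := hLp x
    rwa [hx1, Real.one_rpow] at h
  have hPp1 : ‖P x‖ ^ p ≤ 1 := by
    have := Real.rpow_nonneg (norm_nonneg (x - P x)) p; linarith
  have hPx1 : ‖P x‖ ≤ 1 := by
    have h := (Real.rpow_le_rpow_iff (norm_nonneg _) zero_le_one hp0).mp
      (by rwa [Real.one_rpow])
    exact h
  -- dichotomy
  have hcase : d ≤ ‖x - P x‖ ∨ d ≤ 1 - ‖P x‖ := by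
    by_cases hPx0 : P x = 0
    · right; rw [hPx0, norm_zero]; linarith
    · have hn0 : ‖P x‖ ≠ 0 := norm_ne_zero_iff.mpr hPx0
      have hnpos : 0 < ‖P x‖ := (norm_pos_iff).mpr hPx0
      set z : X := ‖P x‖⁻¹ • P x with hz
      have hzr : z ∈ LinearMap.range (P : X →ₗ[ℝ] X) := by
        exact ⟨‖P x‖⁻¹ • x, by simp [map_smul, hz]⟩
      have hz1 : ‖z‖ = 1 := by
        rw [hz, norm_smul, norm_inv, norm_norm, inv_mul_cancel₀ hn0]
      have hδle := hdist x hxC z hzr hz1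
      have hPz : ‖P x - z‖ = 1 - ‖P x‖ := by
        have : P x - z = (1 - ‖P x‖⁻¹) • P x := by
          rw [hz, sub_smul, one_smul]
        rw [this, norm_smul, Real.norm_eq_abs]
        rw [← abs_of_nonneg (norm_nonneg (P x)), ← abs_mul]
        rw [abs_of_nonneg (norm_nonneg (P x)), sub_mul, one_mul,
          inv_mul_cancel₀ hn0, abs_sub_comm, abs_of_nonneg (by linarith)]
      have htri : ‖x - z‖ ≤ ‖x - P x‖ + (1 - ‖P x‖) := by
        calc ‖x - z‖ = ‖(x - P x) + (P x - z)‖ := by rw [sub_add_sub_cancel]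
          _ ≤ ‖x - P x‖ + ‖P x - z‖ := norm_add_le _ _
          _ = ‖x - P x‖ + (1 - ‖P x‖) := by rw [hPz]
      by_contra hcon
      push_neg at hcon
      obtain ⟨h1, h2⟩ := hcon
      linarith
  rcases hcase with hc | hc
  · -- ‖x - Px‖ ≥ d, so ‖Px‖^p ≤ 1 - d^p
    have hdpe : d ^ p ≤ ‖x - P x‖ ^ p := Real.rpow_le_rpow hd0.le hc hp0.le
    have h1 : ‖P x‖ ^ p ≤ 1 - d ^ p := by linarith
    have h2 : ‖P x‖ ≤ (1 - d ^ p) ^ p⁻¹ :=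
      (Real.le_rpow_inv_iff_of_pos (norm_nonneg _) (by linarith) hp0).mpr h1
    exact h2.trans (le_max_right _ _)
  · exact (by linarith : ‖P x‖ ≤ 1 - d).trans (le_max_left _ _)
end

section
/- Let X and Y be Banach spaces and T ∈ B(X, Y). If there exists a sequence (x_n) in the unit sphere of X with x_n → 0 weakly and ‖Tx_n‖ → ‖T‖, then the essential norm of T equals its operator norm: d(T, K(X,Y)) = ‖T‖. -/
/-- If `T ∈ B(X,Y)` admits a weakly null norming sequence, then its
essential norm equals its operator norm. -/
theorem stmt7
    (X Y : Type*) [NormedAddCommGroup X] [NormedSpace ℝ X] [CompleteSpace X]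
    [NormedAddCommGroup Y] [NormedSpace ℝ Y] [CompleteSpace Y]
    (T : X →L[ℝ] Y)
    (x : ℕ → X) (hx : ∀ n, ‖x n‖ = 1)
    (hweak : ∀ φ : X →L[ℝ] ℝ,
      Filter.Tendsto (fun n => φ (x n)) Filter.atTop (nhds 0))
    (hnorming : Filter.Tendsto (fun n => ‖T (x n)‖) Filter.atTop (nhds ‖T‖)) :
    Metric.infDist T {L : X →L[ℝ] Y | IsCompactOperator ⇑L} = ‖T‖ := by
  have h0 : (0 : X →L[ℝ] Y) ∈ {L : X →L[ℝ] Y | IsCompactOperator ⇑L} := by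
    simpa using (isCompactOperator_zero : IsCompactOperator (0 : X → Y))
  apply le_antisymm
  · calc Metric.infDist T _ ≤ dist T 0 := Metric.infDist_le_dist_of_mem h0
    _ = ‖T‖ := by simp [dist_eq_norm]
  · by_contra hcon
    push_neg at hcon
    obtain ⟨L, hL, hdist⟩ := (Metric.infDist_lt_iff ⟨0, h0⟩).1 hcon
    refine absurd hdist (not_lt.2 ?_)
    rw [dist_eq_norm]
    -- the sequence L (x n) lives in a compact set
    obtain ⟨K, hKc, hKsub⟩ :=
      (hL : IsCompactOperator ⇑(L.toLinearMap)).image_closedBall_subset_compact (𝕜₁ := ℝ) 1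
    have hmem : ∀ n, L (x n) ∈ K := fun n =>
      hKsub ⟨x n, by simp [Metric.mem_closedBall, dist_eq_norm, (hx n).le], rfl⟩
    obtain ⟨y, -, φ, hφmono, hφtendsto⟩ := hKc.tendsto_subseq hmem
    -- y = 0 since x n ⇀ 0
    have hy : y = 0 := by
      apply NormedSpace.eq_zero_of_forall_dual_eq_zero ℝ
      intro ψ
      have h1 : Filter.Tendsto (fun n => ψ (L (x (φ n)))) Filter.atTop (nhds (ψ y)) :=
        (ψ.continuous.tendsto y).comp hφtendsto
      have h2 : Filter.Tendsto (fun n => ψ (L (x (φ n)))) Filter.atTop (nhds 0) :=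
        (hweak (ψ.comp L)).comp hφmono.tendsto_atTop
      exact tendsto_nhds_unique h1 h2
    rw [hy] at hφtendsto
    have hLn : Filter.Tendsto (fun n => ‖L (x (φ n))‖) Filter.atTop (nhds 0) := by
      simpa [Function.comp_def] using (continuous_norm.tendsto (0 : Y)).comp hφtendsto
    have hTn : Filter.Tendsto (fun n => ‖T (x (φ n))‖) Filter.atTop (nhds ‖T‖) :=
      hnorming.comp hφmono.tendsto_atTop
    have hsum : Filter.Tendsto (fun n => ‖T - L‖ + ‖L (x (φ n))‖) Filter.atTop
        (nhds (‖T - L‖ + 0)) := tendsto_const_nhds.add hLn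
    have hle : ∀ n, ‖T (x (φ n))‖ ≤ ‖T - L‖ + ‖L (x (φ n))‖ := by
      intro n
      calc ‖T (x (φ n))‖ ≤ ‖(T - L) (x (φ n))‖ + ‖L (x (φ n))‖ := by
            simpa using norm_add_le ((T - L) (x (φ n))) (L (x (φ n)))
      _ ≤ ‖T - L‖ + ‖L (x (φ n))‖ := by
            gcongr
            calc ‖(T - L) (x (φ n))‖ ≤ ‖T - L‖ * ‖x (φ n)‖ := (T - L).le_opNorm _
            _ = ‖T - L‖ := by rw [hx]; ring
    have := le_of_tendsto_of_tendsto' hTn hsum hle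
    simpa using this
end

section
/- Let X and Y be Banach spaces, and let T ∈ B(X,Y) be nonzero, satisfy the Bhatia–Šemrl property, and suppose span(M_T) is finite dimensional and complemented by a bounded projection. Then ‖T‖_e < ‖T‖. -/
/-- If a nonzero `T ∈ B(X,Y)` satisfies the Bhatia–Šemrl property and
`span(M_T)` is finite dimensional and complemented by a bounded projection, then
`‖T‖ₑ < ‖T‖`. -/
theorem stmt8
    (X Y : Type*) [NormedAddCommGroup X] [NormedSpace ℝ X] [CompleteSpace X]
    [NormedAddCommGroup Y] [NormedSpace ℝ Y] [CompleteSpace Y]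
    (T : X →L[ℝ] Y) (hT0 : T ≠ 0)
    (hBS : ∀ A : X →L[ℝ] Y, (∀ lam : ℝ, ‖T + lam • A‖ ≥ ‖T‖) →
      ∃ x : X, ‖x‖ = 1 ∧ ‖T x‖ = ‖T‖ ∧ ∀ lam : ℝ, ‖T x + lam • A x‖ ≥ ‖T x‖)
    (hfin : FiniteDimensional ℝ
      (Submodule.span ℝ {x : X | ‖x‖ = 1 ∧ ‖T x‖ = ‖T‖}))
    (hcompl : ∃ Pr : X →L[ℝ] X, Pr.comp Pr = Pr ∧
      LinearMap.range (Pr : X →ₗ[ℝ] X) =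
        Submodule.span ℝ {x : X | ‖x‖ = 1 ∧ ‖T x‖ = ‖T‖}) :
    Metric.infDist T {L : X →L[ℝ] Y | IsCompactOperator ⇑L} < ‖T‖ := by
  obtain ⟨P, hPP, hrange⟩ := hcompl
  set F : Submodule ℝ X := LinearMap.range (P : X →ₗ[ℝ] X) with hF
  haveI : FiniteDimensional ℝ F := by rw [hF] at hrange ⊢; rw [hrange]; exact hfin
  -- P is a compact operator
  have hPcomp : IsCompactOperator ⇑P := by
    refine ⟨Subtype.val '' Metric.closedBall (0 : F) ‖P‖, ?_, ?_⟩
    · exact (isCompact_closedBall _ _).image continuous_subtype_val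
    · have : Metric.ball (0 : X) 1 ⊆ ⇑P ⁻¹' (Subtype.val '' Metric.closedBall (0 : F) ‖P‖) := by
        intro x hx
        refine ⟨⟨P x, LinearMap.mem_range_self _ x⟩, ?_, rfl⟩
        simp only [Metric.mem_closedBall, dist_zero_right]
        calc ‖(⟨P x, _⟩ : F)‖ = ‖P x‖ := rfl
          _ ≤ ‖P‖ * ‖x‖ := P.le_opNorm x
          _ ≤ ‖P‖ * 1 := by
              have := mem_ball_zero_iff.mp hx
              exact mul_le_mul_of_nonneg_left this.le (norm_nonneg _)
          _ = ‖P‖ := mul_one _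
      exact Filter.mem_of_superset (Metric.ball_mem_nhds 0 one_pos) this
  set A : X →L[ℝ] Y := T.comp P with hA
  have hAcomp : IsCompactOperator ⇑A := hPcomp.clm_comp (g := T)
  by_contra hcon
  push_neg at hcon
  -- T is Birkhoff-orthogonal to A
  have horth : ∀ lam : ℝ, ‖T + lam • A‖ ≥ ‖T‖ := by
    intro lam
    have hmem : (-(lam • A)) ∈ {L : X →L[ℝ] Y | IsCompactOperator ⇑L} := by
      have : IsCompactOperator ⇑(lam • A) := by
        have := hAcomp.smul lam
        exact this
      have h2 : IsCompactOperator ⇑(-(lam • A)) := by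
        have := this.neg
        exact this
      exact h2
    calc ‖T‖ ≤ Metric.infDist T {L : X →L[ℝ] Y | IsCompactOperator ⇑L} := hcon
      _ ≤ dist T (-(lam • A)) := Metric.infDist_le_dist_of_mem hmem
      _ = ‖T + lam • A‖ := by rw [dist_eq_norm, sub_neg_eq_add]
  obtain ⟨x, hx1, hxT, hxorth⟩ := hBS A horth
  -- x ∈ range P, so P x = x and A x = T x
  have hxF : x ∈ F := by
    rw [hrange]
    exact Submodule.subset_span ⟨hx1, hxT⟩
  obtain ⟨y, hy⟩ := hxF
  have hy' : P y = x := hy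
  have hPx : P x = x := by
    have h := DFunLike.congr_fun hPP y
    simp only [ContinuousLinearMap.comp_apply] at h
    rw [hy'] at h
    exact h
  have hAx : A x = T x := by simp [hA, hPx]
  have := hxorth (-1)
  rw [hAx] at this
  simp only [neg_one_smul, add_neg_cancel, norm_zero] at this
  have hTx0 : ‖T x‖ = 0 := le_antisymm this (norm_nonneg _)
  rw [hxT] at hTx0
  exact hT0 (norm_eq_zero.mp hTx0)
end

section
/- Let X be a strictly convex, smooth, reflexive real Banach space and P ∈ B(X) a projection with ‖P‖ = 1. Then the norm-attainment set of P is exactly the unit sphere of its range: M_P = S_{R(P)}. -/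
/-- For a norm-one projection `P` on a strictly convex, smooth,
reflexive real Banach space, `M_P = S_{R(P)}`. -/
theorem stmt10
    (X : Type*) [NormedAddCommGroup X] [NormedSpace ℝ X] [CompleteSpace X]
    [StrictConvexSpace ℝ X]
    (hsmooth : ∀ x : X, x ≠ 0 → ∃! f : X →L[ℝ] ℝ, ‖f‖ = 1 ∧ f x = ‖x‖)
    (hrefl : Function.Surjective (NormedSpace.inclusionInDoubleDual ℝ X))
    (P : X →L[ℝ] X) (hproj : P.comp P = P) (hnorm : ‖P‖ = 1) :
    {x : X | ‖x‖ = 1 ∧ ‖P x‖ = 1} =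
      {x : X | ‖x‖ = 1 ∧ x ∈ LinearMap.range (P : X →ₗ[ℝ] X)} := by
  have hPP : ∀ z : X, P (P z) = P z := fun z => congrFun (congrArg DFunLike.coe hproj) z
  ext x
  simp only [Set.mem_setOf_eq, LinearMap.mem_range, ContinuousLinearMap.coe_coe]
  constructor
  · rintro ⟨hx1, hx2⟩
    refine ⟨hx1, x, ?_⟩
    -- get a norming functional for P x
    have hPx0 : P x ≠ 0 := by
      intro h; rw [h, norm_zero] at hx2; norm_num at hx2
    obtain ⟨f, hf1, hf2⟩ := exists_dual_vector ℝ (P x) (norm_ne_zero_iff.mpr hPx0)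
    have hf2' : f (P x) = 1 := by
      have := hf2
      simpa [hx2] using this
    have hgx : f (P x) = 1 := hf2'
    -- norm of x + P x is 2
    have hle : ‖x + P x‖ ≤ 2 := by
      calc ‖x + P x‖ ≤ ‖x‖ + ‖P x‖ := norm_add_le _ _
        _ = 2 := by rw [hx1, hx2]; norm_num
    have hfe : f (P (x + P x)) = 2 := by
      rw [map_add, hPP, map_add, hgx]; norm_num
    have hge : (2 : ℝ) ≤ ‖x + P x‖ := by
      have h1 : f (P (x + P x)) ≤ ‖f‖ * ‖P (x + P x)‖ := by
        calc f (P (x + P x)) ≤ |f (P (x + P x))| := le_abs_self _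
          _ = ‖f (P (x + P x))‖ := rfl
          _ ≤ ‖f‖ * ‖P (x + P x)‖ := f.le_opNorm _
      have h2 : ‖P (x + P x)‖ ≤ ‖P‖ * ‖x + P x‖ := P.le_opNorm _
      rw [hfe, hf1, one_mul] at h1
      rw [hnorm, one_mul] at h2
      linarith
    have heq : ‖x + P x‖ = ‖x‖ + ‖P x‖ := by
      rw [hx1, hx2]; linarith
    have := eq_of_norm_eq_of_norm_add_eq (x := x) (y := P x) (by rw [hx1, hx2]) heq
    exact this.symm
  · rintro ⟨hx1, y, hy⟩
    refine ⟨hx1, ?_⟩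
    have : P x = x := by rw [← hy, hPP, hy]
    rw [this, hx1]
end

section
/- Let (Ω, F, μ) be a σ-finite measure space with 1 ≤ p < ∞ such that L_p(μ) is infinite dimensional, and let T be a linear isometry of L_p(μ) into itself. Then T does not satisfy the Bhatia–Šemrl property. -/
open MeasureTheory Set Filter
open scoped ENNReal Topology

section Aux

variable {Ω : Type*} [MeasurableSpace Ω] {μ : Measure Ω}


/-- An atom of the measure algebra. -/
def MyAtom (μ : Measure Ω) (A : Set Ω) : Prop :=
  MeasurableSet A ∧ μ A ≠ 0 ∧
    ∀ B ⊆ A, MeasurableSet B → μ B = 0 ∨ μ (A \ B) = 0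

lemma exists_pos_finite_subset [SigmaFinite μ] {E : Set Ω} (hE : MeasurableSet E)
    (hpos : μ E ≠ 0) :
    ∃ F, F ⊆ E ∧ MeasurableSet F ∧ μ F ≠ 0 ∧ μ F ≠ ∞ := by
  by_contra h
  push_neg at h
  have h0 : ∀ n, μ (E ∩ spanningSets μ n) = 0 := by
    intro n
    by_contra hn
    exact absurd (h _ inter_subset_left (hE.inter (measurableSet_spanningSets μ n)) hn)
      (ne_top_of_le_ne_top (measure_spanningSets_lt_top μ n).ne
        (measure_mono inter_subset_right))
  apply hpos
  have hEq : E = ⋃ n, E ∩ spanningSets μ n := by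
    rw [← inter_iUnion, iUnion_spanningSets, inter_univ]
  rw [hEq]
  exact measure_iUnion_null h0

lemma myAtom_finite [SigmaFinite μ] {A : Set Ω} (hA : MyAtom μ A) : μ A ≠ ∞ := by
  obtain ⟨hmeas, hpos, hatom⟩ := hA
  by_cases h : ∀ n, μ (A ∩ spanningSets μ n) = 0
  · exfalso; apply hpos
    have hEq : A = ⋃ n, A ∩ spanningSets μ n := by
      rw [← inter_iUnion, iUnion_spanningSets, inter_univ]
    rw [hEq]; exact measure_iUnion_null h
  · push_neg at h
    obtain ⟨n, hn⟩ := h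
    rcases hatom _ inter_subset_left (hmeas.inter (measurableSet_spanningSets μ n)) with h0 | h0
    · exact absurd h0 hn
    · have h1 : μ (A ∩ (A ∩ spanningSets μ n)) + μ (A \ (A ∩ spanningSets μ n)) = μ A :=
        measure_inter_add_diff A (hmeas.inter (measurableSet_spanningSets μ n))
      rw [h0, add_zero] at h1
      rw [← h1]
      exact ne_top_of_le_ne_top (measure_spanningSets_lt_top μ n).ne
        (measure_mono ((inter_subset_right).trans inter_subset_right))

/-- There is no infinite disjoint family of positive-measure sets. -/
def NoInfFam (μ : Measure Ω) : Prop :=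
  ¬ ∃ D : ℕ → Set Ω, (∀ k, MeasurableSet (D k)) ∧ Pairwise (Function.onFun Disjoint D) ∧
      ∀ k, μ (D k) ≠ 0

lemma pairwise_of_lt {D : ℕ → Set Ω} (h : ∀ m n, m < n → Disjoint (D m) (D n)) :
    Pairwise (Function.onFun Disjoint D) := by
  intro m n hmn
  rcases lt_or_gt_of_ne hmn with h' | h'
  · exact h m n h'
  · exact (h n m h').symm

lemma exists_myAtom (H : NoInfFam μ) {E : Set Ω} (hE : MeasurableSet E) (hpos : μ E ≠ 0) :
    ∃ A, A ⊆ E ∧ MyAtom μ A := by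
  by_contra hno
  push_neg at hno
  have hsplit : ∀ B : Set Ω, ∃ C : Set Ω,
      (MeasurableSet B ∧ μ B ≠ 0 ∧ B ⊆ E) →
        (MeasurableSet C ∧ C ⊆ B ∧ μ C ≠ 0 ∧ μ (B \ C) ≠ 0) := by
    intro B
    by_cases hB : MeasurableSet B ∧ μ B ≠ 0 ∧ B ⊆ E
    · obtain ⟨hBm, hBpos, hBE⟩ := hB
      have hnB : ¬ MyAtom μ B := fun h => hno B hBE h
      simp only [MyAtom, not_and, not_forall] at hnB
      obtain ⟨C, hCB, hCm, hC⟩ := hnB hBm hBpos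
      push_neg at hC
      exact ⟨C, fun _ => ⟨hCm, hCB, hC.1, hC.2⟩⟩
    · exact ⟨∅, fun h => absurd h hB⟩
  choose g hg using hsplit
  set seq : ℕ → Set Ω := fun n => Nat.rec E (fun _ B => B \ g B) n with hseq
  have hseq_succ : ∀ n, seq (n + 1) = seq n \ g (seq n) := fun n => rfl
  have hinv : ∀ n, MeasurableSet (seq n) ∧ μ (seq n) ≠ 0 ∧ seq n ⊆ E := by
    intro n
    induction n with
    | zero => exact ⟨hE, hpos, subset_rfl⟩
    | succ n ih =>
      obtain ⟨hm, hp, hsub⟩ := ih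
      obtain ⟨hgm, hgsub, hgpos, hgdiff⟩ := hg (seq n) ⟨hm, hp, hsub⟩
      exact ⟨hm.diff hgm, hgdiff, (diff_subset).trans hsub⟩
  have hmono : ∀ m n, m ≤ n → seq n ⊆ seq m := by
    intro m n hmn
    induction hmn with
    | refl => exact subset_rfl
    | step _ ih => exact ((hseq_succ _) ▸ diff_subset).trans ih
  apply H
  refine ⟨fun n => g (seq n), fun n => (hg (seq n) (hinv n)).1, ?_,
    fun n => (hg (seq n) (hinv n)).2.2.1⟩
  apply pairwise_of_lt
  intro m n h
  have h1 : g (seq n) ⊆ seq n := (hg (seq n) (hinv n)).2.1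
  have h2 : seq n ⊆ seq (m + 1) := hmono (m+1) n h
  have hd : Disjoint (g (seq m)) (seq (m+1)) := by
    rw [hseq_succ m]; exact disjoint_sdiff_right
  exact hd.mono_right (h1.trans h2)

lemma exists_atom_partition [SigmaFinite μ] (H : NoInfFam μ) :
    ∃ (N : ℕ) (A : ℕ → Set Ω), (∀ i, MeasurableSet (A i)) ∧
      (∀ i j, i ≠ j → Disjoint (A i) (A j)) ∧
      (∀ i < N, MyAtom μ (A i)) ∧
      μ ((⋃ i ∈ Finset.range N, A i)ᶜ) = 0 := by
  have hpick : ∀ B : Set Ω, ∃ A : Set Ω, A ⊆ B ∧ MeasurableSet A ∧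
      ((MeasurableSet B ∧ μ B ≠ 0) → MyAtom μ A) := by
    intro B
    by_cases hB : MeasurableSet B ∧ μ B ≠ 0
    · obtain ⟨A, hAB, hA⟩ := exists_myAtom H hB.1 hB.2
      exact ⟨A, hAB, hA.1, fun _ => hA⟩
    · exact ⟨∅, empty_subset _, MeasurableSet.empty, fun h => absurd h hB⟩
  choose g hg1 hg2 hg3 using hpick
  set R : ℕ → Set Ω := fun n => Nat.rec univ (fun _ B => B \ g B) n with hRdef
  have hR_succ : ∀ n, R (n + 1) = R n \ g (R n) := fun n => rfl
  have hRmeas : ∀ n, MeasurableSet (R n) := by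
    intro n; induction n with
    | zero => exact MeasurableSet.univ
    | succ n ih => exact ih.diff (hg2 _)
  have hmono : ∀ m n, m ≤ n → R n ⊆ R m := by
    intro m n hmn
    induction hmn with
    | refl => exact subset_rfl
    | step _ ih => exact ((hR_succ _) ▸ diff_subset).trans ih
  have hdisj : ∀ i j, i ≠ j → Disjoint (g (R i)) (g (R j)) := by
    apply pairwise_of_lt
    intro m n h
    have h1 : g (R n) ⊆ R n := hg1 _
    have h2 : R n ⊆ R (m + 1) := hmono (m+1) n h
    have hd : Disjoint (g (R m)) (R (m+1)) := by
      rw [hR_succ m]; exact disjoint_sdiff_right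
    exact hd.mono_right (h1.trans h2)
  have hRfor : ∀ n, R n = (⋃ i ∈ Finset.range n, g (R i))ᶜ := by
    intro n; induction n with
    | zero => simp only [Finset.range_zero, Finset.notMem_empty, iUnion_of_empty,
        iUnion_empty, compl_empty]; rfl
    | succ n ih =>
      rw [hR_succ, Finset.range_add_one, Finset.set_biUnion_insert, union_comm, compl_union,
        ← ih, ← diff_eq]
  have key : ∃ N, μ (R N) = 0 := by
    by_contra hall
    push_neg at hall
    exact H ⟨fun n => g (R n), fun n => hg2 _, pairwise_of_lt (fun m n h => hdisj m n h.ne),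
      fun n => (hg3 (R n) ⟨hRmeas n, hall n⟩).2.1⟩
  set N := Nat.find key with hNdef
  refine ⟨N, fun n => g (R n), fun n => hg2 _, hdisj, ?_, ?_⟩
  · intro i hi
    exact hg3 (R i) ⟨hRmeas i, Nat.find_min key hi⟩
  · rw [← hRfor]; exact Nat.find_spec key

lemma myAtom_ae_const [SigmaFinite μ] {A : Set Ω} (hA : MyAtom μ A) {g : Ω → ℝ}
    (hg : Measurable g) : ∃ c : ℝ, ∀ᵐ x ∂μ, x ∈ A → g x = c := by
  have hfin : μ A ≠ ∞ := myAtom_finite hA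
  obtain ⟨hmeas, hpos, hatom⟩ := hA
  have hmS : ∀ t : ℝ, MeasurableSet {x | t < g x} := fun t =>
    measurableSet_lt measurable_const hg
  -- dichotomy
  have hd : ∀ t : ℝ, μ (A ∩ {x | t < g x}) = 0 ∨
      (μ (A ∩ {x | g x ≤ t}) = 0 ∧ μ (A ∩ {x | t < g x}) = μ A) := by
    intro t
    have hsplit : μ (A ∩ {x | t < g x}) + μ (A \ {x | t < g x}) = μ A :=
      measure_inter_add_diff A (hmS t)
    have hACeq : A \ {x | t < g x} = A ∩ {x | g x ≤ t} := by
      ext x; simp [not_lt]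
    rcases hatom (A ∩ {x | t < g x}) inter_subset_left (hmeas.inter (hmS t)) with h | h
    · exact Or.inl h
    · rw [diff_self_inter, hACeq] at h
      rw [hACeq] at hsplit
      right
      rw [h, add_zero] at hsplit
      exact ⟨h, hsplit⟩
  have hApos : 0 < μ A := pos_iff_ne_zero.mpr hpos
  -- upper cutoff
  have hne : ∃ n : ℕ, μ (A ∩ {x | (n : ℝ) < g x}) = 0 := by
    have hanti : Antitone (fun n : ℕ => A ∩ {x | (n : ℝ) < g x}) := by
      intro n m hnm x hx
      obtain ⟨h1, h2⟩ := hx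
      simp only [mem_setOf_eq] at h2 ⊢
      exact ⟨h1, lt_of_le_of_lt (show (n:ℝ) ≤ m by exact_mod_cast hnm) h2⟩
    have hiInter : ⋂ n : ℕ, A ∩ {x | (n : ℝ) < g x} = ∅ := by
      ext x
      simp only [mem_iInter, mem_inter_iff, mem_setOf_eq, mem_empty_iff_false, iff_false,
        not_forall, not_and, not_lt]
      obtain ⟨n, hn⟩ := exists_nat_gt (g x)
      exact ⟨n, fun _ => hn.le⟩
    have htend := tendsto_measure_iInter_atTop
      (fun n => (hmeas.inter (hmS _)).nullMeasurableSet) hanti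
      ⟨0, ne_top_of_le_ne_top hfin (measure_mono inter_subset_left)⟩
    rw [hiInter, measure_empty] at htend
    obtain ⟨n, hn⟩ := (htend.eventually_lt_const hApos).exists
    simp only [Function.comp_apply] at hn
    rcases hd n with h | h
    · exact ⟨n, h⟩
    · exact absurd (h.2 ▸ hn) (lt_irrefl _)
  -- lower cutoff
  have hbdd : ∃ n : ℕ, μ (A ∩ {x | g x ≤ -(n : ℝ)}) = 0 := by
    have hanti : Antitone (fun n : ℕ => A ∩ {x | g x ≤ -(n : ℝ)}) := by
      intro n m hnm x hx
      obtain ⟨h1, h2⟩ := hx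
      simp only [mem_setOf_eq] at h2 ⊢
      refine ⟨h1, h2.trans ?_⟩
      simp only [neg_le_neg_iff]
      exact_mod_cast hnm
    have hiInter : ⋂ n : ℕ, A ∩ {x | g x ≤ -(n : ℝ)} = ∅ := by
      ext x
      simp only [mem_iInter, mem_inter_iff, mem_setOf_eq, mem_empty_iff_false, iff_false,
        not_forall, not_and, not_le]
      obtain ⟨n, hn⟩ := exists_nat_gt (-(g x))
      exact ⟨n, fun _ => by linarith⟩
    have htend := tendsto_measure_iInter_atTop
      (fun n => (hmeas.inter (measurableSet_le hg measurable_const)).nullMeasurableSet) hanti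
      ⟨0, ne_top_of_le_ne_top hfin (measure_mono inter_subset_left)⟩
    rw [hiInter, measure_empty] at htend
    obtain ⟨n, hn⟩ := (htend.eventually_lt_const hApos).exists
    simp only [Function.comp_apply] at hn
    rcases hd (-(n : ℝ)) with h | h
    · -- then μ (A ∩ {g ≤ -n}) = μ A, contradicting hn
      exfalso
      have hsplit : μ (A ∩ {x | (-(n:ℝ)) < g x}) + μ (A \ {x | (-(n:ℝ)) < g x}) = μ A :=
        measure_inter_add_diff A (hmS _)
      have hACeq : A \ {x | (-(n:ℝ)) < g x} = A ∩ {x | g x ≤ -(n:ℝ)} := by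
        ext x; simp [not_lt]
      rw [hACeq, h, zero_add] at hsplit
      rw [hsplit] at hn
      exact lt_irrefl _ hn
    · exact ⟨n, h.1⟩
  obtain ⟨n₀, hn₀⟩ := hne
  obtain ⟨n₁, hn₁⟩ := hbdd
  set Scrit : Set ℝ := {t : ℝ | μ (A ∩ {x | t < g x}) = 0} with hScrit
  have hup : ∀ t t' : ℝ, t ∈ Scrit → t ≤ t' → t' ∈ Scrit := by
    intro t t' ht htt'
    refine measure_mono_null ?_ ht
    intro x hx
    obtain ⟨h1, h2⟩ := hx
    simp only [mem_setOf_eq] at h2 ⊢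
    exact ⟨h1, lt_of_le_of_lt htt' h2⟩
  have hSne : Scrit.Nonempty := ⟨(n₀ : ℝ), hn₀⟩
  have hSbdd : BddBelow Scrit := by
    refine ⟨-(n₁ : ℝ), ?_⟩
    intro t ht
    by_contra hlt
    push_neg at hlt
    have hcover : μ A ≤ μ (A ∩ {x | g x ≤ -(n₁:ℝ)}) + μ (A ∩ {x | t < g x}) := by
      refine (measure_mono ?_).trans (measure_union_le _ _)
      intro x hx
      rcases le_or_gt (g x) (-(n₁:ℝ)) with h | h
      · exact Or.inl ⟨hx, h⟩
      · exact Or.inr ⟨hx, lt_trans hlt h⟩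
    rw [hn₁, ht, add_zero] at hcover
    exact hpos (le_antisymm (by exact_mod_cast hcover) zero_le)
  set c := sInf Scrit with hc
  have claim1 : ∀ t : ℝ, c < t → μ (A ∩ {x | t < g x}) = 0 := by
    intro t ht
    obtain ⟨t', ht', htt'⟩ := exists_lt_of_csInf_lt hSne ht
    exact hup t' t ht' htt'.le
  have claim2 : ∀ t : ℝ, t < c → μ (A ∩ {x | g x ≤ t}) = 0 := by
    intro t ht
    have hnot : t ∉ Scrit := fun hmem => absurd (csInf_le hSbdd hmem) (not_le.mpr ht)
    rcases hd t with h | h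
    · exact absurd h hnot
    · exact h.1
  refine ⟨c, ?_⟩
  set Z : ℚ → Set Ω := fun q =>
    if c < (q : ℝ) then A ∩ {x | (q : ℝ) < g x}
    else if (q : ℝ) < c then A ∩ {x | g x ≤ (q : ℝ)} else ∅ with hZ
  have hZnull : ∀ q, μ (Z q) = 0 := by
    intro q
    by_cases h1 : c < (q : ℝ)
    · simp only [hZ, if_pos h1]; exact claim1 _ h1
    · by_cases h2 : (q : ℝ) < c
      · simp only [hZ, if_neg h1, if_pos h2]; exact claim2 _ h2
      · simp only [hZ, if_neg h1, if_neg h2]; exact measure_empty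
  rw [ae_iff]
  refine measure_mono_null (fun x hx => ?_) (measure_iUnion_null hZnull)
  simp only [mem_setOf_eq, not_forall] at hx
  obtain ⟨hxA, hxne⟩ := hx
  rcases lt_or_gt_of_ne hxne with h | h
  · -- g x < c
    obtain ⟨q, hq1, hq2⟩ := exists_rat_btwn h
    refine mem_iUnion.mpr ⟨q, ?_⟩
    have h1 : ¬ c < (q : ℝ) := not_lt.mpr hq2.le
    simp only [hZ, if_neg h1, if_pos hq2]
    exact ⟨hxA, hq1.le⟩
  · -- c < g x
    obtain ⟨q, hq1, hq2⟩ := exists_rat_btwn h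
    refine mem_iUnion.mpr ⟨q, ?_⟩
    simp only [hZ, if_pos hq1]
    exact ⟨hxA, hq2⟩

lemma Lp.coeFn_finset_sum {E : Type*} [NormedAddCommGroup E] {p : ℝ≥0∞} {ι : Type*}
    (s : Finset ι) (F : ι → Lp E p μ) :
    ⇑(∑ i ∈ s, F i) =ᵐ[μ] fun x => ∑ i ∈ s, F i x := by
  classical
  induction s using Finset.induction with
  | empty => simp only [Finset.sum_empty]; exact Lp.coeFn_zero E p μ
  | insert a s' hnotmem ih =>
    rw [Finset.sum_insert hnotmem]
    filter_upwards [Lp.coeFn_add (F a) (∑ i ∈ s', F i), ih] with x h1 h2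
    rw [h1]
    simp only [Pi.add_apply, h2, Finset.sum_insert hnotmem]

lemma findim_of_noInfFam [SigmaFinite μ] (p : ℝ≥0∞) [Fact (1 ≤ p)] (hp : p ≠ ∞)
    (H : NoInfFam μ) : FiniteDimensional ℝ (Lp ℝ p μ) := by
  classical
  obtain ⟨N, A, hmeas, hdisj, hatom, hcover⟩ := exists_atom_partition H
  set e : Fin N → Lp ℝ p μ := fun i =>
    indicatorConstLp p (hmeas i) (myAtom_finite (hatom i i.isLt)) (1 : ℝ) with he
  have hmem : ∀ f : Lp ℝ p μ, f ∈ Submodule.span ℝ (Set.range e) := by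
    intro f
    set g : Ω → ℝ := (Lp.aestronglyMeasurable f).mk _ with hg
    have hgmeas : Measurable g := (Lp.aestronglyMeasurable f).measurable_mk
    have hfg : ⇑f =ᵐ[μ] g := (Lp.aestronglyMeasurable f).ae_eq_mk
    have hc : ∀ i : Fin N, ∃ c : ℝ, ∀ᵐ x ∂μ, x ∈ A i → g x = c := fun i =>
      myAtom_ae_const (hatom i i.isLt) hgmeas
    choose c hcae using hc
    have hfeq : f = ∑ i : Fin N, c i • e i := by
      apply Lp.ext
      have h2 : ∀ᵐ x ∂μ, ∀ i : Fin N, x ∈ A i → g x = c i := ae_all_iff.mpr hcae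
      have h3 : ∀ᵐ x ∂μ, x ∈ ⋃ i ∈ Finset.range N, A i := by
        rw [ae_iff]
        refine measure_mono_null (fun x hx => ?_) hcover
        simpa using hx
      have h4 : ∀ᵐ x ∂μ, ∀ i : Fin N,
          (c i • e i : Lp ℝ p μ) x = c i * (A i).indicator (fun _ => (1:ℝ)) x := by
        rw [ae_all_iff]
        intro i
        filter_upwards [Lp.coeFn_smul (c i) (e i), indicatorConstLp_coeFn (p := p)
          (hs := hmeas i) (hμs := myAtom_finite (hatom i i.isLt)) (c := (1:ℝ))] with x ha hb
        rw [ha]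
        simp only [Pi.smul_apply, smul_eq_mul]
        -- need ⇑(e i) x = indicator; hb gives it
        rw [hb]
      filter_upwards [hfg, h2, h3, h4,
        (Lp.coeFn_finset_sum (Finset.univ : Finset (Fin N)) (fun i => c i • e i)).symm]
        with x hx1 hx2 hx3 hx4 hx5
      obtain ⟨j', hj'⟩ := mem_iUnion.mp hx3
      simp only [mem_iUnion, Finset.mem_range, exists_prop] at hj'
      obtain ⟨hj'lt, hxj⟩ := hj'
      set j : Fin N := ⟨j', hj'lt⟩ with hjdef
      have hterm : ∀ i : Fin N, (c i • e i : Lp ℝ p μ) x = if i = j then c j else 0 := by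
        intro i
        rw [hx4 i]
        by_cases hij : i = j
        · subst hij
          rw [indicator_of_mem hxj, if_pos rfl, mul_one]
        · have hne : (i : ℕ) ≠ (j : ℕ) := fun h => hij (Fin.ext h)
          have hxi : x ∉ A i := fun hxi =>
            (Set.disjoint_left.mp (hdisj i j hne)) hxi hxj
          rw [indicator_of_notMem hxi, mul_zero, if_neg hij]
      calc ⇑f x = g x := hx1
        _ = c j := hx2 j hxj
        _ = ∑ i : Fin N, (c i • e i : Lp ℝ p μ) x := by
            rw [Finset.sum_congr rfl (fun i _ => hterm i)]
            simp
        _ = (∑ i : Fin N, c i • e i : Lp ℝ p μ) x := hx5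
    rw [hfeq]
    exact Submodule.sum_mem _ fun i _ =>
      Submodule.smul_mem _ _ (Submodule.subset_span ⟨i, rfl⟩)
  have hfd : FiniteDimensional ℝ (Submodule.span ℝ (Set.range e)) :=
    FiniteDimensional.span_of_finite ℝ (finite_range e)
  have heq : Submodule.span ℝ (Set.range e) = ⊤ := top_unique (fun f _ => hmem f)
  exact LinearEquiv.finiteDimensional ((LinearEquiv.ofEq _ _ heq).trans Submodule.topEquiv)

lemma exists_disjoint_posfin [SigmaFinite μ] (p : ℝ≥0∞) [Fact (1 ≤ p)] (hp : p ≠ ∞)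
    (hinf : ¬ FiniteDimensional ℝ (Lp ℝ p μ)) :
    ∃ D : ℕ → Set Ω, (∀ k, MeasurableSet (D k)) ∧ (∀ i j, i ≠ j → Disjoint (D i) (D j)) ∧
      (∀ k, μ (D k) ≠ 0) ∧ (∀ k, μ (D k) ≠ ∞) := by
  have hH : ¬ NoInfFam μ := fun H => hinf (findim_of_noInfFam p hp H)
  have hex : ∃ D : ℕ → Set Ω, (∀ k, MeasurableSet (D k)) ∧
      Pairwise (Function.onFun Disjoint D) ∧ ∀ k, μ (D k) ≠ 0 := not_not.mp hH
  obtain ⟨D, hm, hpw, hpos⟩ := hex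
  choose F hsub hFm hFpos hFfin using fun k => exists_pos_finite_subset (hm k) (hpos k)
  exact ⟨F, hFm, fun i j hij => (hpw hij).mono (hsub i) (hsub j), hFpos, hFfin⟩

end Aux

set_option maxHeartbeats 2000000

/-- If `L_p(μ)` is infinite dimensional (`μ` σ-finite, `1 ≤ p < ∞`),
then no linear isometry of `L_p(μ)` into itself satisfies the Bhatia–Šemrl
property. -/
theorem stmt12
    (Ω : Type*) [MeasurableSpace Ω] (μ : Measure Ω) [SigmaFinite μ]
    (p : ℝ≥0∞) [Fact (1 ≤ p)] (hp : p ≠ ∞)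
    (hinf : ¬ FiniteDimensional ℝ (Lp ℝ p μ))
    (T : Lp ℝ p μ →L[ℝ] Lp ℝ p μ)
    (hiso : ∀ f : Lp ℝ p μ, ‖T f‖ = ‖f‖) :
    ¬ (∀ A : Lp ℝ p μ →L[ℝ] Lp ℝ p μ,
        (∀ lam : ℝ, ‖T + lam • A‖ ≥ ‖T‖) →
        ∃ f : Lp ℝ p μ, ‖f‖ = 1 ∧ ‖T f‖ = ‖T‖ ∧
          ∀ lam : ℝ, ‖T f + lam • A f‖ ≥ ‖T f‖) := by
  intro hBS
  classical
  have hp1 : (1 : ℝ≥0∞) ≤ p := Fact.out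
  have hp0 : p ≠ 0 := (lt_of_lt_of_le zero_lt_one hp1).ne'
  have hpr_pos : 0 < p.toReal := ENNReal.toReal_pos hp0 hp
  obtain ⟨D0, hD0meas, hD0disj, hD0pos, hD0fin⟩ := exists_disjoint_posfin p hp hinf
  -- augment `D0 0` with the complement of the union, to get a genuine countable partition
  set D : ℕ → Set Ω := fun k => if k = 0 then D0 0 ∪ (⋃ n, D0 n)ᶜ else D0 k with hD
  have hDmeas : ∀ k, MeasurableSet (D k) := by
    intro k
    by_cases h : k = 0
    · simp only [hD, if_pos h]
      exact (hD0meas 0).union (MeasurableSet.iUnion hD0meas).compl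
    · simp only [hD, if_neg h]; exact hD0meas k
  have hDdisj : ∀ i j, i ≠ j → Disjoint (D i) (D j) := by
    have key : ∀ j, j ≠ 0 → Disjoint (D 0) (D j) := by
      intro j hj
      simp only [hD, if_pos rfl, if_neg hj]
      refine disjoint_union_left.mpr ⟨hD0disj 0 j (Ne.symm hj), ?_⟩
      exact disjoint_compl_left.mono_right (subset_iUnion D0 j)
    intro i j hij
    by_cases hi : i = 0
    · subst hi; exact key j (Ne.symm hij)
    · by_cases hj : j = 0
      · subst hj; exact (key i hi).symm
      · simp only [hD, if_neg hi, if_neg hj]; exact hD0disj i j hij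
  have hDpos : ∀ k, μ (D k) ≠ 0 := by
    intro k
    by_cases h : k = 0
    · simp only [hD, if_pos h]
      intro h0
      exact hD0pos 0 (measure_mono_null subset_union_left h0)
    · simp only [hD, if_neg h]; exact hD0pos k
  have hDfin : ∀ k, k ≠ 0 → μ (D k) ≠ ∞ := by
    intro k h
    simp only [hD, if_neg h]; exact hD0fin k
  have hDcover : ∀ x, ∃ k, x ∈ D k := by
    intro x
    by_cases h : x ∈ ⋃ n, D0 n
    · obtain ⟨n, hn⟩ := mem_iUnion.mp h
      by_cases h0 : n = 0
      · subst h0; exact ⟨0, by simp only [hD, if_pos rfl]; exact Or.inl hn⟩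
      · exact ⟨n, by simp only [hD, if_neg h0]; exact hn⟩
    · exact ⟨0, by simp only [hD, if_pos rfl]; exact Or.inr h⟩
  set idx : Ω → ℕ := fun x => Nat.find (hDcover x) with hidx
  have hidx_mem : ∀ x, x ∈ D (idx x) := fun x => Nat.find_spec (hDcover x)
  have hidx_eq : ∀ k x, x ∈ D k → idx x = k := by
    intro k x hx
    by_contra hne
    exact Set.disjoint_left.mp (hDdisj _ _ hne) (hidx_mem x) hx
  have hidx_meas : Measurable idx := by
    apply measurable_to_countable'
    intro k
    have hpre : idx ⁻¹' {k} = D k := by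
      ext x
      simp only [mem_preimage, mem_singleton_iff]
      exact ⟨fun h => h ▸ hidx_mem x, hidx_eq k x⟩
    rw [hpre]; exact hDmeas k
  set s : Ω → ℝ := fun x => (2 : ℝ)⁻¹ ^ (idx x + 1) with hs
  have hs_meas : Measurable s :=
    Measurable.comp (g := fun n : ℕ => (2:ℝ)⁻¹ ^ (n + 1)) measurable_from_top hidx_meas
  have hs_pos : ∀ x, 0 < s x := fun x => pow_pos (by norm_num) _
  have hs_le : ∀ x, s x ≤ 2⁻¹ := by
    intro x
    calc (2:ℝ)⁻¹ ^ (idx x + 1) ≤ 2⁻¹ ^ 1 :=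
          pow_le_pow_of_le_one (by norm_num) (by norm_num) (by omega)
      _ = 2⁻¹ := pow_one _
  have hs_on : ∀ k x, x ∈ D k → s x = 2⁻¹ ^ (k + 1) := by
    intro k x hx
    simp only [hs]
    rw [hidx_eq k x hx]
  -- the multiplication operator
  have hbound : ∀ (f : Ω → ℝ) (x : Ω), ‖s x * f x‖ ≤ ‖f x‖ := by
    intro f x
    rw [norm_mul]
    have h1 : ‖s x‖ ≤ 1 := by
      rw [Real.norm_eq_abs, abs_of_pos (hs_pos x)]
      linarith [hs_le x]
    calc ‖s x‖ * ‖f x‖ ≤ 1 * ‖f x‖ := mul_le_mul_of_nonneg_right h1 (norm_nonneg _)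
      _ = ‖f x‖ := one_mul _
  have hmul : ∀ f : Lp ℝ p μ, MemLp (fun x => s x * f x) p μ := fun f =>
    MemLp.of_le (Lp.memLp f) (hs_meas.aestronglyMeasurable.mul (Lp.aestronglyMeasurable f))
      (Eventually.of_forall fun x => hbound _ x)
  set S₀ : Lp ℝ p μ →ₗ[ℝ] Lp ℝ p μ :=
    { toFun := fun f => (hmul f).toLp _
      map_add' := by
        intro f g
        apply Lp.ext
        filter_upwards [MemLp.coeFn_toLp (hmul (f + g)), MemLp.coeFn_toLp (hmul f),
          MemLp.coeFn_toLp (hmul g), Lp.coeFn_add f g,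
          Lp.coeFn_add ((hmul f).toLp _) ((hmul g).toLp _)] with x h1 h2 h3 h4 h5
        rw [h1, h5]
        simp only [Pi.add_apply]
        rw [h2, h3, h4]
        simp only [Pi.add_apply]
        ring
      map_smul' := by
        intro a f
        apply Lp.ext
        filter_upwards [MemLp.coeFn_toLp (hmul (a • f)), MemLp.coeFn_toLp (hmul f),
          Lp.coeFn_smul a f, Lp.coeFn_smul a ((hmul f).toLp _)] with x h1 h2 h3 h4
        simp only [RingHom.id_apply]
        rw [h1, h4]
        simp only [Pi.smul_apply, smul_eq_mul]
        rw [h2, h3]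
        simp only [Pi.smul_apply, smul_eq_mul]
        ring } with hS₀
  have hS₀_norm : ∀ f, ‖S₀ f‖ ≤ ‖f‖ := by
    intro f
    have happ : S₀ f = (hmul f).toLp _ := rfl
    rw [happ, Lp.norm_toLp, Lp.norm_def]
    apply ENNReal.toReal_mono (Lp.eLpNorm_ne_top f)
    exact eLpNorm_mono_ae (Eventually.of_forall fun x => hbound _ x)
  set S : Lp ℝ p μ →L[ℝ] Lp ℝ p μ :=
    S₀.mkContinuous 1 (fun f => by simpa using hS₀_norm f) with hS
  have hS_apply : ∀ f, S f = (hmul f).toLp _ := fun f => rfl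
  set A : Lp ℝ p μ →L[ℝ] Lp ℝ p μ := T.comp S with hA
  have hA_apply : ∀ f, A f = T (S f) := fun f => rfl
  -- test vectors
  set e : ℕ → Lp ℝ p μ := fun k =>
    indicatorConstLp p (hDmeas (k + 1)) (hDfin (k + 1) (Nat.succ_ne_zero k)) (1 : ℝ) with he
  have he_pos : ∀ k, 0 < ‖e k‖ := by
    intro k
    rw [norm_indicatorConstLp hp0 hp]
    simp only [norm_one, one_mul]
    apply Real.rpow_pos_of_pos
    exact ENNReal.toReal_pos (hDpos (k + 1)) (hDfin (k + 1) (Nat.succ_ne_zero k))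
  have hSe : ∀ k, S (e k) = ((2 : ℝ)⁻¹ ^ (k + 2)) • e k := by
    intro k
    rw [hS_apply]
    apply Lp.ext
    filter_upwards [MemLp.coeFn_toLp (hmul (e k)), Lp.coeFn_smul ((2:ℝ)⁻¹ ^ (k + 2)) (e k),
      indicatorConstLp_coeFn (p := p) (hs := hDmeas (k + 1))
        (hμs := hDfin (k + 1) (Nat.succ_ne_zero k)) (c := (1 : ℝ))] with x h1 h2 h3
    rw [h1, h2]
    simp only [Pi.smul_apply, smul_eq_mul]
    have h3' : (e k) x = (D (k + 1)).indicator (fun _ => (1:ℝ)) x := h3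
    rw [h3']
    by_cases hx : x ∈ D (k + 1)
    · rw [indicator_of_mem hx]
      rw [hs_on (k + 1) x hx]
    · rw [indicator_of_notMem hx]
      ring
  have hTnorm : ‖T‖ = 1 := by
    apply le_antisymm
    · exact T.opNorm_le_bound zero_le_one fun f => by rw [hiso f, one_mul]
    · have h := T.ratio_le_opNorm (e 0)
      rwa [hiso (e 0), div_self (he_pos 0).ne'] at h
  -- the Birkhoff-orthogonality hypothesis holds for A
  have hyp : ∀ lam : ℝ, ‖T + lam • A‖ ≥ ‖T‖ := by
    intro lam
    rw [hTnorm]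
    have hk : ∀ k : ℕ, 1 - |lam| * 2⁻¹ ^ (k + 2) ≤ ‖T + lam • A‖ := by
      intro k
      have happ : (T + lam • A) (e k) = T ((1 + lam * 2⁻¹ ^ (k + 2)) • e k) := by
        rw [ContinuousLinearMap.add_apply, ContinuousLinearMap.smul_apply, hA_apply,
          hSe k, _root_.map_smul, _root_.map_smul, add_smul, one_smul, smul_smul]
      have hnorm : ‖(T + lam • A) (e k)‖ = |1 + lam * 2⁻¹ ^ (k + 2)| * ‖e k‖ := by
        rw [happ, hiso, norm_smul, Real.norm_eq_abs]
      have hratio := (T + lam • A).ratio_le_opNorm (e k)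
      rw [hnorm, mul_div_assoc, div_self (he_pos k).ne', mul_one] at hratio
      have habs : 1 - |lam| * 2⁻¹ ^ (k + 2) ≤ |1 + lam * 2⁻¹ ^ (k + 2)| := by
        have h1 : |lam * 2⁻¹ ^ (k + 2)| = |lam| * 2⁻¹ ^ (k + 2) := by
          rw [abs_mul, abs_of_pos (pow_pos (by norm_num : (0:ℝ) < 2⁻¹) (k + 2))]
        have h2 : (1:ℝ) ≤ |1 + lam * 2⁻¹ ^ (k + 2)| + |lam * 2⁻¹ ^ (k + 2)| := by
          have := abs_add_le (1 + lam * 2⁻¹ ^ (k + 2)) (-(lam * 2⁻¹ ^ (k + 2)))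
          simp only [add_neg_cancel_right, abs_neg, abs_one] at this
          linarith
        linarith
      linarith
    have htend : Tendsto (fun k : ℕ => 1 - |lam| * 2⁻¹ ^ (k + 2)) atTop (𝓝 1) := by
      have h0 : Tendsto (fun k : ℕ => (2⁻¹:ℝ) ^ (k + 2)) atTop (𝓝 0) :=
        (tendsto_pow_atTop_nhds_zero_of_lt_one (by norm_num) (by norm_num)).comp
          (tendsto_add_atTop_nat 2)
      have h1 := (tendsto_const_nhds (x := (1:ℝ))).sub (h0.const_mul |lam|)
      simpa using h1
    exact le_of_tendsto' htend hk
  -- apply the Bhatia-Šemrl property and derive a contradiction with lam = -1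
  obtain ⟨f, hf1, _, hforth⟩ := hBS A hyp
  -- measurable representative
  set g : Ω → ℝ := (Lp.aestronglyMeasurable f).mk _ with hgdef
  have hgmeas : Measurable g := (Lp.aestronglyMeasurable f).measurable_mk
  have hfg : ⇑f =ᵐ[μ] g := (Lp.aestronglyMeasurable f).ae_eq_mk
  have hgmem : MemLp g p μ := (Lp.memLp f).ae_eq hfg
  set pr := p.toReal with hprdef
  have hInt_meas : Measurable fun x => (‖g x‖₊ : ℝ≥0∞) ^ pr :=
    (hgmeas.nnnorm.coe_nnreal_ennreal).pow_const pr
  have htot : (∫⁻ x, (‖g x‖₊ : ℝ≥0∞) ^ pr ∂μ) ≠ ∞ :=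
    (lintegral_rpow_enorm_lt_top_of_eLpNorm_lt_top hp0 hp hgmem.eLpNorm_lt_top).ne
  set G : ℕ → Set Ω := fun k => idx ⁻¹' (Iic k) with hG
  have hGmeas : ∀ k, MeasurableSet (G k) := fun k => hidx_meas measurableSet_Iic
  have hex : ∃ k, (∫⁻ x in G k, (‖g x‖₊ : ℝ≥0∞) ^ pr ∂μ) ≠ 0 := by
    by_contra hall
    push_neg at hall
    have hae : ∀ k, ∀ᵐ x ∂μ, x ∈ G k → (‖g x‖₊ : ℝ≥0∞) ^ pr = 0 := fun k =>
      (setLIntegral_eq_zero_iff (hGmeas k) hInt_meas).mp (hall k)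
    have hae2 : ∀ᵐ x ∂μ, ∀ k : ℕ, x ∈ G k → (‖g x‖₊ : ℝ≥0∞) ^ pr = 0 := ae_all_iff.mpr hae
    have hg0 : ⇑f =ᵐ[μ] 0 := by
      filter_upwards [hfg, hae2] with x h1 h2
      have hx : x ∈ G (idx x) := by simp [hG]
      have := h2 (idx x) hx
      rw [ENNReal.rpow_eq_zero_iff] at this
      rcases this with ⟨h, _⟩ | ⟨h, _⟩
      · simp only [ENNReal.coe_eq_zero, nnnorm_eq_zero] at h
        rw [h1, h]; rfl
      · exact absurd h (ENNReal.coe_ne_top)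
    have : f = 0 := Lp.ext (hg0.trans (Lp.coeFn_zero ℝ p μ).symm)
    rw [this, norm_zero] at hf1
    exact one_ne_zero hf1.symm
  obtain ⟨k, hk⟩ := hex
  set a := ∫⁻ x in G k, (‖g x‖₊ : ℝ≥0∞) ^ pr ∂μ with ha
  have ha_fin : a ≠ ∞ := fun h =>
    htot (top_le_iff.mp (h ▸ setLIntegral_le_lintegral _ _))
  -- the contraction factor on G k
  set c : ℝ := 1 - (2:ℝ)⁻¹ ^ (k + 1) with hc
  have hc_lt : c < 1 := by
    have : (0:ℝ) < 2⁻¹ ^ (k + 1) := pow_pos (by norm_num) _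
    simp only [hc]; linarith
  have hc_nonneg : 0 ≤ c := by
    have : (2:ℝ)⁻¹ ^ (k + 1) ≤ 2⁻¹ ^ 0 := pow_le_pow_of_le_one (by norm_num) (by norm_num) (by omega)
    simp only [pow_zero] at this
    simp only [hc]; linarith
  set C : ℝ≥0∞ := (ENNReal.ofReal c) ^ pr with hC
  have hC_lt : C < 1 := ENNReal.rpow_lt_one (by
      rw [← ENNReal.ofReal_one]
      exact ENNReal.ofReal_lt_ofReal_iff_of_nonneg hc_nonneg |>.mpr hc_lt) hpr_pos
  have hC_ne_top : C ≠ ∞ := (hC_lt.trans ENNReal.one_lt_top).ne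
  -- pointwise bounds for φ = (1 - s) * g
  set φ : Ω → ℝ := fun x => (1 - s x) * g x with hφ
  have hb2 : ∀ x, (‖φ x‖₊ : ℝ≥0∞) ^ pr ≤ (‖g x‖₊ : ℝ≥0∞) ^ pr := by
    intro x
    apply ENNReal.rpow_le_rpow _ hpr_pos.le
    rw [← enorm_eq_nnnorm, ← enorm_eq_nnnorm, ← ofReal_norm, ← ofReal_norm]
    apply ENNReal.ofReal_le_ofReal
    simp only [hφ, norm_mul]
    have h1 : ‖1 - s x‖ ≤ 1 := by
      rw [Real.norm_eq_abs, abs_of_nonneg (by linarith [hs_le x] : (0:ℝ) ≤ 1 - s x)]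
      linarith [hs_pos x]
    calc ‖1 - s x‖ * ‖g x‖ ≤ 1 * ‖g x‖ := mul_le_mul_of_nonneg_right h1 (norm_nonneg _)
      _ = ‖g x‖ := one_mul _
  have hb1 : ∀ x ∈ G k, (‖φ x‖₊ : ℝ≥0∞) ^ pr ≤ C * (‖g x‖₊ : ℝ≥0∞) ^ pr := by
    intro x hx
    have hsx : (2:ℝ)⁻¹ ^ (k + 1) ≤ s x := by
      simp only [hG, mem_preimage, mem_Iic] at hx
      simp only [hs]
      exact pow_le_pow_of_le_one (by norm_num) (by norm_num) (by omega)
    have hφx : ‖φ x‖ ≤ c * ‖g x‖ := by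
      simp only [hφ, norm_mul]
      apply mul_le_mul_of_nonneg_right _ (norm_nonneg _)
      rw [Real.norm_eq_abs, abs_of_nonneg (by linarith [hs_le x] : (0:ℝ) ≤ 1 - s x)]
      simp only [hc]; linarith
    calc (‖φ x‖₊ : ℝ≥0∞) ^ pr ≤ (ENNReal.ofReal (c * ‖g x‖)) ^ pr := by
          apply ENNReal.rpow_le_rpow _ hpr_pos.le
          rw [← enorm_eq_nnnorm, ← ofReal_norm]
          exact ENNReal.ofReal_le_ofReal hφx
      _ = C * (‖g x‖₊ : ℝ≥0∞) ^ pr := by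
          rw [ENNReal.ofReal_mul hc_nonneg, ENNReal.mul_rpow_of_nonneg _ _ hpr_pos.le,
            ofReal_norm, enorm_eq_nnnorm]
  -- strict norm inequality
  have hmain : ‖f - S f‖ < 1 := by
    have hsub : ⇑(f - S f) =ᵐ[μ] φ := by
      filter_upwards [Lp.coeFn_sub f (S f), MemLp.coeFn_toLp (hmul f), hfg] with x h1 h2 h3
      have h2' : (S f) x = s x * f x := by rw [hS_apply]; exact h2
      rw [h1]
      simp only [Pi.sub_apply, hφ]
      rw [h2', h3]
      ring
    have hint : (∫⁻ x, (‖φ x‖₊ : ℝ≥0∞) ^ pr ∂μ) < ∫⁻ x, (‖g x‖₊ : ℝ≥0∞) ^ pr ∂μ := by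
      have hsplit1 : (∫⁻ x, (‖φ x‖₊ : ℝ≥0∞) ^ pr ∂μ) =
          (∫⁻ x in G k, (‖φ x‖₊ : ℝ≥0∞) ^ pr ∂μ) +
          (∫⁻ x in (G k)ᶜ, (‖φ x‖₊ : ℝ≥0∞) ^ pr ∂μ) := (lintegral_add_compl _ (hGmeas k)).symm
      have hsplit2 : (∫⁻ x, (‖g x‖₊ : ℝ≥0∞) ^ pr ∂μ) =
          a + (∫⁻ x in (G k)ᶜ, (‖g x‖₊ : ℝ≥0∞) ^ pr ∂μ) := (lintegral_add_compl _ (hGmeas k)).symm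
      have hle1 : (∫⁻ x in G k, (‖φ x‖₊ : ℝ≥0∞) ^ pr ∂μ) ≤ C * a := by
        calc (∫⁻ x in G k, (‖φ x‖₊ : ℝ≥0∞) ^ pr ∂μ)
            ≤ ∫⁻ x in G k, C * (‖g x‖₊ : ℝ≥0∞) ^ pr ∂μ :=
              setLIntegral_mono (hInt_meas.const_mul C) hb1
          _ = C * a := lintegral_const_mul' C _ hC_ne_top
      have hlt : C * a < a := by
        have := ENNReal.mul_lt_mul_right hk ha_fin hC_lt
        rwa [mul_one, mul_comm] at this
      have hle2 : (∫⁻ x in (G k)ᶜ, (‖φ x‖₊ : ℝ≥0∞) ^ pr ∂μ) ≤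
          ∫⁻ x in (G k)ᶜ, (‖g x‖₊ : ℝ≥0∞) ^ pr ∂μ :=
        setLIntegral_mono hInt_meas fun x _ => hb2 x
      have hb_fin : (∫⁻ x in (G k)ᶜ, (‖g x‖₊ : ℝ≥0∞) ^ pr ∂μ) ≠ ∞ := fun h =>
        htot (top_le_iff.mp (h ▸ setLIntegral_le_lintegral _ _))
      rw [hsplit1, hsplit2]
      calc (∫⁻ x in G k, (‖φ x‖₊ : ℝ≥0∞) ^ pr ∂μ) + (∫⁻ x in (G k)ᶜ, (‖φ x‖₊ : ℝ≥0∞) ^ pr ∂μ)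
          ≤ C * a + (∫⁻ x in (G k)ᶜ, (‖g x‖₊ : ℝ≥0∞) ^ pr ∂μ) := add_le_add hle1 hle2
        _ < a + (∫⁻ x in (G k)ᶜ, (‖g x‖₊ : ℝ≥0∞) ^ pr ∂μ) :=
            ENNReal.add_lt_add_right hb_fin hlt
    have hsn : eLpNorm φ p μ < eLpNorm g p μ := by
      rw [eLpNorm_eq_lintegral_rpow_enorm_toReal hp0 hp, eLpNorm_eq_lintegral_rpow_enorm_toReal hp0 hp]
      exact ENNReal.rpow_lt_rpow hint (by positivity)
    have hgn_ne : eLpNorm g p μ ≠ ∞ := hgmem.eLpNorm_ne_top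
    calc ‖f - S f‖ = (eLpNorm φ p μ).toReal := by
          rw [Lp.norm_def, eLpNorm_congr_ae hsub]
      _ < (eLpNorm g p μ).toReal :=
          (ENNReal.toReal_lt_toReal ((hsn.trans (lt_top_iff_ne_top.mpr hgn_ne)).ne) hgn_ne).mpr hsn
      _ = ‖f‖ := by rw [Lp.norm_def, eLpNorm_congr_ae hfg]
      _ = 1 := hf1
  -- contradiction
  have hcontra := hforth (-1)
  rw [hiso f, hf1] at hcontra
  have heq : T f + (-1 : ℝ) • A f = T (f - S f) := by
    rw [hA_apply, map_sub, neg_one_smul]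
    abel
  rw [heq, hiso] at hcontra
  linarith [hmain]
end

section
/- Let X be a smooth real Banach space, P ∈ B(X) a projection with ‖P‖ = 1, x a unit vector with ‖Px‖ = 1, and let J(Px) be the unique norm-one supporting functional at Px. Then every z ∈ ker(P) satisfies J(Px)(z) = 0. -/
/-- In a smooth real Banach space, if `P` is a norm-one projection,
`x` a unit vector with `‖Px‖ = 1`, and `J(Px)` the (unique) norm-one supporting
functional at `Px`, then `J(Px)` vanishes on `ker P`. -/
theorem stmt19
    (X : Type*) [NormedAddCommGroup X] [NormedSpace ℝ X] [CompleteSpace X]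
    (hsmooth : ∀ u : X, u ≠ 0 → ∃! f : X →L[ℝ] ℝ, ‖f‖ = 1 ∧ f u = ‖u‖)
    (P : X →L[ℝ] X) (hproj : P.comp P = P) (hnorm : ‖P‖ = 1)
    (x : X) (hx : ‖x‖ = 1) (hPx : ‖P x‖ = 1)
    (J : X →L[ℝ] ℝ) (hJ : ‖J‖ = 1) (hJPx : J (P x) = 1) :
    ∀ z : X, P z = 0 → J z = 0 := by
  intro z hz
  have hPxne : P x ≠ 0 := by
    intro h
    rw [h, norm_zero] at hPx
    norm_num at hPx
  have hPPx : P (P x) = P x := by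
    have := congrArg (fun f : X →L[ℝ] X => f x) hproj
    simpa using this
  set g : X →L[ℝ] ℝ := J.comp P with hg
  have hgPx : g (P x) = 1 := by simp [hg, hPPx, hJPx]
  have hgle : ‖g‖ ≤ 1 := by
    calc ‖g‖ ≤ ‖J‖ * ‖P‖ := ContinuousLinearMap.opNorm_comp_le _ _
    _ = 1 := by rw [hJ, hnorm]; ring
  have hgge : (1 : ℝ) ≤ ‖g‖ := by
    have := g.le_opNorm (P x)
    rw [hgPx, hPx, mul_one] at this
    simpa using this
  have hgnorm : ‖g‖ = 1 := le_antisymm hgle hgge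
  obtain ⟨f, hf, huniq⟩ := hsmooth (P x) hPxne
  have h1 : J = f := huniq J ⟨hJ, by rw [hJPx, hPx]⟩
  have h2 : g = f := huniq g ⟨hgnorm, by rw [hgPx, hPx]⟩
  have : J z = g z := by rw [h1, h2]
  rw [this]
  simp [hg, hz]
end
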